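/- arXiv:2303.07707 — 5 statements merged into one kernel-verified Lean document; each statement's English description precedes it below -/
import Mathlib

section
/- Let K be a field with char K ≠ 2, n ≥ 2 and 1 ≤ i ≤ n−1. Let V = K^{2n+1} with basis e_0, e_1, …, e_{2n} and the nondegenerate symmetric bilinear form (x,y) = 2x_0y_0 + Σ_{j=1}^n (x_j y_{n+j} + x_{n+j} y_j), with associated quadratic form Q(x) = (x,x)/2 of Witt index n. Set i' = ⌊i/2⌋ and ε = (−1)^i, and let θ be the diagonal map diag(ε; −1 repeated i' times; +1 repeated n−i' times; −1 repeated i' times; +1 repeated n−i' times) with respect to this basis. Then θ preserves the form, and the collineation it induces on the orthogonal polar space has opposition diagram B_{n;i}^1; explicitly: (a) θ maps some singular point to an opposite point, i.e. there is v with Q(v) = 0 and (v, θv) ≠ 0; (b) every totally singular subspace of dimension ≥ i+1 contains a nonzero θ-fixed vector, hence is not mapped to an opposite; (c) θ maps some totally singular i-dimensional subspace U to an opposite, i.e. U ∩ (θU)^⊥ = 0. -/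
/-!
STATEMENT 9: char K ≠ 2, n ≥ 2, 1 ≤ i ≤ n−1. On V = K^{2n+1} with the bilinear form
(x,y) = 2x₀y₀ + ∑ⱼ (xⱼ y_{n+j} + x_{n+j} yⱼ) and quadratic form Q(x) = (x,x)/2 of Witt
index n, the diagonal map θ = diag(ε; −1 ×i'; +1 ×(n−i'); −1 ×i'; +1 ×(n−i')),
where i' = ⌊i/2⌋, ε = (−1)^i, preserves the form and its collineation of the orthogonal
polar space has opposition diagram B_{n;i}^1: (a) some singular point goes to an opposite;
(b) every totally singular subspace of dimension ≥ i+1 contains a nonzero fixed vector,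
hence is not mapped to an opposite; (c) some totally singular i-space goes to an opposite.
-/

open Module Submodule

noncomputable section

/-- `K^{2n+1}`, written as `K × K^n × K^n`. -/
abbrev VB (K : Type) (n : ℕ) : Type := K × (Fin n → K) × (Fin n → K)

/-- The symmetric bilinear form `(x,y) = 2x₀y₀ + ∑ⱼ (xⱼ y_{n+j} + x_{n+j} yⱼ)`. -/
def bform {K : Type} [Field K] {n : ℕ} (x y : VB K n) : K :=
  2 * x.1 * y.1 + ∑ j, (x.2.1 j * y.2.2 j + x.2.2 j * y.2.1 j)

/-- The associated quadratic form `Q(x) = (x,x)/2 = x₀² + ∑ⱼ xⱼ x_{n+j}` (Witt index n). -/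
def qform {K : Type} [Field K] {n : ℕ} (x : VB K n) : K :=
  x.1 * x.1 + ∑ j, x.2.1 j * x.2.2 j

/-- The diagonal map `diag(ε; −1 ×i'; +1 ×(n−i'); −1 ×i'; +1 ×(n−i'))`
with `i' = ⌊i/2⌋`, `ε = (−1)^i`. -/
def thetaB (K : Type) [Field K] (n i : ℕ) : VB K n → VB K n :=
  fun x => ((-1 : K) ^ i * x.1,
            fun j => if (j : ℕ) < i / 2 then - x.2.1 j else x.2.1 j,
            fun j => if (j : ℕ) < i / 2 then - x.2.2 j else x.2.2 j)

/-!
`thetaB K n i` multiplies `e₀` by `(-1)^i` and each hyperbolic pair `eⱼ, e_{n+j}` by `-1` (for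
`j < i/2`) or `1`, so it is an isometry whose `(-1)`-eigenspace has dimension
`2 ⌊i/2⌋ + (i mod 2) = i`. Hence a totally singular subspace `U` of dimension `> i` contains a
nonzero fixed vector `v`, and `(v, θu) = (θv, θu) = (v, u) = 0` for all `u ∈ U`.

Conversely, with `i' = ⌊i/2⌋`, the `i` singular vectors
`eₖ + e_{i'+k} ± (e_{n+k} - e_{n+i'+k})` (`k < i'`), together with `e₀ + e_{2i'} - e_{n+2i'}`
when `i` is odd, are pairwise orthogonal and the matrix of `(x, θy)` on them is diagonal with
entries `±4`. So they span a totally singular `i`-space `U` with `U ∩ (θU)^⊥ = 0`, and each of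
them is a singular point mapped to an opposite one.
-/

section Pairing

variable {R V ι : Type*} [CommRing R] [AddCommGroup V] [Module R V]
  (B : LinearMap.BilinForm R V) {f g : ι → V}

theorem LinearMap.BilinForm.sum_smul_apply_of_pairwise [Fintype ι]
    (hfg : ∀ r s, r ≠ s → B (f r) (g s) = 0) (a : ι → R) (s : ι) :
    B (∑ r, a r • f r) (g s) = a s * B (f s) (g s) := by
  simp only [map_sum, LinearMap.sum_apply, LinearMap.map_smul₂, smul_eq_mul]
  exact Finset.sum_eq_single s (fun r _ hrs => by rw [hfg r s hrs, mul_zero]) (by simp)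

theorem LinearMap.BilinForm.linearIndependent_of_pairing [Fintype ι] [NoZeroDivisors R]
    (hfg : ∀ r s, r ≠ s → B (f r) (g s) = 0) (hff : ∀ r, B (f r) (g r) ≠ 0) :
    LinearIndependent R f := by
  refine Fintype.linearIndependent_iff.2 fun a ha s => ?_
  have := B.sum_smul_apply_of_pairwise hfg a s
  rw [ha, LinearMap.map_zero₂] at this
  exact (mul_eq_zero.1 this.symm).resolve_right (hff s)

theorem LinearMap.BilinForm.eq_zero_of_mem_span_of_pairing [Fintype ι] [NoZeroDivisors R]
    (hfg : ∀ r s, r ≠ s → B (f r) (g s) = 0) (hff : ∀ r, B (f r) (g r) ≠ 0)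
    {v : V} (hv : v ∈ span R (Set.range f)) (hvg : ∀ s, B v (g s) = 0) : v = 0 := by
  obtain ⟨a, rfl⟩ := (Submodule.mem_span_range_iff_exists_fun R).1 hv
  have ha : a = 0 := funext fun s => by
    have := B.sum_smul_apply_of_pairwise hfg a s
    rw [hvg] at this
    exact (mul_eq_zero.1 this.symm).resolve_right (hff s)
  simp [ha]

theorem LinearMap.BilinForm.apply_eq_zero_of_mem_span
    (hf : ∀ r s, B (f r) (f s) = 0) {x y : V} (hx : x ∈ span R (Set.range f))
    (hy : y ∈ span R (Set.range f)) : B x y = 0 := by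
  have hleft : ∀ r, span R (Set.range f) ≤ LinearMap.ker (B (f r)) := fun r =>
    Submodule.span_le.2 (Set.range_subset_iff.2 (hf r))
  have : span R (Set.range f) ≤ LinearMap.ker (B.flip y) :=
    Submodule.span_le.2 (Set.range_subset_iff.2 fun r => hleft r hy)
  exact this hx

end Pairing

lemma neg_one_pow_mul_self {R : Type*} [Monoid R] [HasDistribNeg R] (i : ℕ) :
    (-1 : R) ^ i * (-1) ^ i = 1 := by
  rw [← pow_add]
  exact Even.neg_one_pow ⟨i, rfl⟩

section Forms

variable {K : Type} [Field K] {n : ℕ}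

lemma bform_self (x : VB K n) : bform x x = 2 * qform x := by
  rw [bform, qform, mul_add, Finset.mul_sum]
  congr 1
  · ring
  · exact Finset.sum_congr rfl fun j _ => by ring

lemma bform_eq_qform_add_sub (x y : VB K n) : bform x y = qform (x + y) - qform x - qform y := by
  have expand : ∀ j, (x.2.1 j + y.2.1 j) * (x.2.2 j + y.2.2 j) =
      x.2.1 j * x.2.2 j + y.2.1 j * y.2.2 j + (x.2.1 j * y.2.2 j + x.2.2 j * y.2.1 j) :=
    fun j => by ring
  simp only [bform, qform, Prod.fst_add, Prod.snd_add, Pi.add_apply, expand,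
    Finset.sum_add_distrib]
  ring

def bformBilin (K : Type) [Field K] (n : ℕ) : LinearMap.BilinForm K (VB K n) :=
  LinearMap.mk₂ K bform
    (fun x y z => by simp [bform, add_mul, Finset.sum_add_distrib]; ring)
    (fun a x y => by simp [bform, Finset.mul_sum, mul_add, mul_assoc, mul_left_comm])
    (fun x y z => by simp [bform, mul_add, Finset.sum_add_distrib]; ring)
    (fun a x y => by simp [bform, Finset.mul_sum, mul_add, mul_assoc, mul_left_comm])

variable {i : ℕ}

lemma qform_thetaB (x : VB K n) : qform (thetaB K n i x) = qform x := by
  simp only [qform, thetaB]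
  congr 1
  · linear_combination x.1 * x.1 * neg_one_pow_mul_self (R := K) i
  · exact Finset.sum_congr rfl fun j _ => by split_ifs <;> ring

lemma bform_thetaB (x y : VB K n) : bform (thetaB K n i x) (thetaB K n i y) = bform x y := by
  simp only [bform, thetaB]
  congr 1
  · linear_combination 2 * x.1 * y.1 * neg_one_pow_mul_self (R := K) i
  · exact Finset.sum_congr rfl fun j _ => by split_ifs <;> ring

end Forms

/-- Labels of the basis `e_k, e_{n+k}` (`k < i/2`), and `e₀` if `i` is odd, of the
`(-1)`-eigenspace of `thetaB K n i`; they also index the family spanning the opposite `i`-space. -/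
abbrev NegIndex (i : ℕ) : Type := (Fin (i / 2) × Bool) ⊕ Fin (i % 2)

lemma card_negIndex (i : ℕ) : Fintype.card (NegIndex i) = i := by
  simp only [Fintype.card_sum, Fintype.card_prod, Fintype.card_fin, Fintype.card_bool]
  omega

section FixedVector

variable {K : Type} [Field K] {n i : ℕ}

def negCoords (K : Type) [Field K] (h : i / 2 ≤ n) : VB K n →ₗ[K] NegIndex i → K where
  toFun x
    | .inl (k, true) => x.2.1 (Fin.castLE h k)
    | .inl (k, false) => x.2.2 (Fin.castLE h k)
    | .inr _ => x.1
  map_add' _ _ := by ext (⟨_, _ | _⟩ | _) <;> rfl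
  map_smul' _ _ := by ext (⟨_, _ | _⟩ | _) <;> rfl

lemma thetaB_eq_self_of_negCoords_eq_zero (h : i / 2 ≤ n) {x : VB K n}
    (hx : negCoords K h x = 0) : thetaB K n i x = x := by
  refine Prod.ext ?_ (Prod.ext (funext fun j => ?_) (funext fun j => ?_))
  · rcases Nat.mod_two_eq_zero_or_one i with he | ho
    · simp [thetaB, Even.neg_one_pow (Nat.even_iff.2 he)]
    · simp [thetaB, show x.1 = 0 from congrFun hx (.inr ⟨0, by omega⟩)]
  · by_cases hj : (j : ℕ) < i / 2
    · simp [thetaB, hj, show x.2.1 j = 0 from congrFun hx (.inl (⟨j, hj⟩, true))]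
    · simp [thetaB, hj]
  · by_cases hj : (j : ℕ) < i / 2
    · simp [thetaB, hj, show x.2.2 j = 0 from congrFun hx (.inl (⟨j, hj⟩, false))]
    · simp [thetaB, hj]

lemma exists_thetaB_fixed_of_lt_finrank (h : i / 2 ≤ n) {U : Submodule K (VB K n)}
    (hU : i < finrank K U) : ∃ v ∈ U, v ≠ 0 ∧ thetaB K n i v = v := by
  have hker : LinearMap.ker ((negCoords K h).comp U.subtype) ≠ ⊥ :=
    LinearMap.ker_ne_bot_of_finrank_lt (by rwa [finrank_fintype_fun_eq_card, card_negIndex])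
  obtain ⟨v, hv, hv0⟩ := (Submodule.ne_bot_iff _).1 hker
  exact ⟨v, v.2, by simpa using hv0, thetaB_eq_self_of_negCoords_eq_zero h hv⟩

lemma bform_thetaB_eq_zero_of_fixed {U : Submodule K (VB K n)} (hU : ∀ x ∈ U, qform x = 0)
    {v : VB K n} (hv : v ∈ U) (hfix : thetaB K n i v = v) {u : VB K n} (hu : u ∈ U) :
    bform v (thetaB K n i u) = 0 := by
  rw [← hfix, bform_thetaB, bform_eq_qform_add_sub, hU _ (U.add_mem hv hu), hU v hv, hU u hu,
    sub_zero, sub_zero]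

end FixedVector

section OppositeSubspace

variable {K : Type} [Field K] {n i : ℕ} (h : i < n)

def lowIdx (k : Fin (i / 2)) : Fin n := ⟨k, by omega⟩

def highIdx (k : Fin (i / 2)) : Fin n := ⟨i / 2 + k, by omega⟩

def midIdx : Fin n := ⟨2 * (i / 2), by omega⟩

@[simp] lemma lowIdx_inj {k l : Fin (i / 2)} : lowIdx h k = lowIdx h l ↔ k = l := by
  simp [lowIdx, Fin.ext_iff]

@[simp] lemma highIdx_inj {k l : Fin (i / 2)} : highIdx h k = highIdx h l ↔ k = l := by
  simp [highIdx, Fin.ext_iff]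

@[simp] lemma lowIdx_ne_highIdx (k l : Fin (i / 2)) : lowIdx h k ≠ highIdx h l := by
  simp [lowIdx, highIdx, Fin.ext_iff]; omega

@[simp] lemma highIdx_ne_lowIdx (k l : Fin (i / 2)) : highIdx h k ≠ lowIdx h l :=
  (lowIdx_ne_highIdx h l k).symm

@[simp] lemma lowIdx_ne_midIdx (k : Fin (i / 2)) : lowIdx h k ≠ midIdx h := by
  simp [lowIdx, midIdx, Fin.ext_iff]; omega

@[simp] lemma midIdx_ne_lowIdx (k : Fin (i / 2)) : midIdx h ≠ lowIdx h k :=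
  (lowIdx_ne_midIdx h k).symm

@[simp] lemma highIdx_ne_midIdx (k : Fin (i / 2)) : highIdx h k ≠ midIdx h := by
  simp [highIdx, midIdx, Fin.ext_iff]; omega

@[simp] lemma midIdx_ne_highIdx (k : Fin (i / 2)) : midIdx h ≠ highIdx h k :=
  (highIdx_ne_midIdx h k).symm

def pairVec (k : Fin (i / 2)) (s : K) : VB K n :=
  (0, Pi.single (lowIdx h k) 1 + Pi.single (highIdx h k) 1,
    Pi.single (lowIdx h k) s - Pi.single (highIdx h k) s)

def midVec : VB K n := (1, Pi.single (midIdx h) 1, -Pi.single (midIdx h) 1)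

lemma thetaB_pairVec (k : Fin (i / 2)) (s : K) :
    thetaB K n i (pairVec h k s) = (0, -Pi.single (lowIdx h k) 1 + Pi.single (highIdx h k) 1,
      -Pi.single (lowIdx h k) s - Pi.single (highIdx h k) s) := by
  ext j
  · simp [thetaB, pairVec]
  all_goals
    by_cases hj : (j : ℕ) < i / 2 <;> simp [thetaB, pairVec, hj, Pi.single_apply] <;>
      grind [lowIdx, highIdx]

lemma thetaB_midVec :
    thetaB K n i (midVec h) =
      ((-1) ^ i, Pi.single (midIdx h) 1, -Pi.single (midIdx h) (1 : K)) := by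
  ext j
  · simp [thetaB, midVec]
  all_goals
    by_cases hj : (j : ℕ) < i / 2 <;> simp [thetaB, midVec, hj, Pi.single_apply]
    grind [midIdx]

lemma bform_pairVec (k l : Fin (i / 2)) (s t : K) :
    bform (pairVec h k s) (pairVec h l t) = 0 := by
  simp [bform, pairVec, Pi.single_apply, Finset.sum_add_distrib, add_mul, mul_add, ite_mul,
    mul_ite]

lemma bform_pairVec_midVec (k : Fin (i / 2)) (s : K) : bform (pairVec h k s) (midVec h) = 0 := by
  simp [bform, pairVec, midVec, Pi.single_apply, Finset.sum_add_distrib, mul_ite]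

lemma bform_midVec_pairVec (k : Fin (i / 2)) (s : K) : bform (midVec h) (pairVec h k s) = 0 := by
  simp [bform, pairVec, midVec, Pi.single_apply, Finset.sum_add_distrib, mul_add, ite_mul, mul_ite]

lemma bform_midVec : bform (midVec h) (midVec (K := K) h) = 0 := by
  simp [bform, midVec, Finset.sum_add_distrib, Pi.single_apply]
  norm_num

lemma bform_pairVec_thetaB (k l : Fin (i / 2)) (s t : K) :
    bform (pairVec h k s) (thetaB K n i (pairVec h l t)) = if k = l then -2 * (s + t) else 0 := by
  rw [thetaB_pairVec]
  rcases eq_or_ne k l with rfl | hkl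
  · simp [bform, pairVec, Pi.single_apply, Finset.sum_add_distrib, add_mul, mul_add, ite_mul,
      mul_ite]
    ring
  · simp [bform, pairVec, Pi.single_apply, Finset.sum_add_distrib, add_mul, mul_add, ite_mul,
      mul_ite, hkl, hkl.symm]

lemma bform_pairVec_thetaB_midVec (k : Fin (i / 2)) (s : K) :
    bform (pairVec h k s) (thetaB K n i (midVec h)) = 0 := by
  simp [thetaB_midVec, bform, pairVec, Pi.single_apply, Finset.sum_add_distrib, mul_ite]

lemma bform_midVec_thetaB_pairVec (k : Fin (i / 2)) (s : K) :
    bform (midVec h) (thetaB K n i (pairVec h k s)) = 0 := by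
  simp [thetaB_pairVec, bform, midVec, Pi.single_apply, Finset.sum_add_distrib, mul_add, ite_mul,
    mul_ite]

lemma bform_midVec_thetaB :
    bform (midVec h) (thetaB K n i (midVec (K := K) h)) = 2 * (-1) ^ i - 2 := by
  rw [thetaB_midVec]
  simp [bform, midVec, Finset.sum_add_distrib, Pi.single_apply]
  ring

def oppositeFamily : NegIndex i → VB K n
  | .inl (k, b) => pairVec h k (if b then 1 else -1)
  | .inr _ => midVec h

lemma bform_oppositeFamily (r s : NegIndex i) :
    bform (oppositeFamily (K := K) h r) (oppositeFamily h s) = 0 := by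
  rcases r with ⟨k, b⟩ | _ <;> rcases s with ⟨l, c⟩ | _ <;>
    simp only [oppositeFamily, bform_pairVec, bform_pairVec_midVec, bform_midVec_pairVec,
      bform_midVec]

lemma bform_oppositeFamily_thetaB_of_ne {r s : NegIndex i} (hrs : r ≠ s) :
    bform (oppositeFamily (K := K) h r) (thetaB K n i (oppositeFamily h s)) = 0 := by
  rcases r with ⟨k, b⟩ | t <;> rcases s with ⟨l, c⟩ | t'
  · rw [oppositeFamily, oppositeFamily, bform_pairVec_thetaB, ite_eq_right_iff]
    rintro rfl
    cases b <;> cases c <;> simp_all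
  · exact bform_pairVec_thetaB_midVec h k _
  · exact bform_midVec_thetaB_pairVec h l _
  · exact absurd (congrArg Sum.inr (Fin.ext (by omega))) hrs

lemma bform_oppositeFamily_thetaB_self_ne_zero (hchar : (2 : K) ≠ 0) (r : NegIndex i) :
    bform (oppositeFamily (K := K) h r) (thetaB K n i (oppositeFamily h r)) ≠ 0 := by
  have four : (4 : K) ≠ 0 := by
    rw [show (4 : K) = 2 * 2 by norm_num]; exact mul_ne_zero hchar hchar
  rcases r with ⟨k, b⟩ | t
  · rw [oppositeFamily, bform_pairVec_thetaB, if_pos rfl]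
    cases b <;> norm_num [four]
  · have hodd : Odd i := Nat.odd_iff.2 (by have := t.isLt; omega)
    rw [oppositeFamily, bform_midVec_thetaB, hodd.neg_one_pow]
    norm_num [four]

end OppositeSubspace

section Diagram

variable {K : Type} [Field K] {n i : ℕ}

lemma qform_eq_zero_of_bform_self (hchar : (2 : K) ≠ 0) {x : VB K n} (hx : bform x x = 0) :
    qform x = 0 := by
  rw [bform_self] at hx
  exact (mul_eq_zero.1 hx).resolve_left hchar

theorem exists_singular_opposite (hchar : (2 : K) ≠ 0) (h : i < n) (hi : 1 ≤ i) :
    ∃ v : VB K n, v ≠ 0 ∧ qform v = 0 ∧ bform v (thetaB K n i v) ≠ 0 := by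
  obtain ⟨r⟩ : Nonempty (NegIndex i) :=
    Fintype.card_pos_iff.1 (by rw [card_negIndex i]; omega)
  have hr := bform_oppositeFamily_thetaB_self_ne_zero (K := K) h hchar r
  refine ⟨oppositeFamily h r, fun h0 => hr ?_,
    qform_eq_zero_of_bform_self hchar (bform_oppositeFamily h r r), hr⟩
  simp [h0, bform]

theorem exists_totallySingular_opposite (hchar : (2 : K) ≠ 0) (h : i < n) :
    ∃ U : Submodule K (VB K n), (∀ x ∈ U, qform x = 0) ∧ finrank K U = i ∧
      (∀ v ∈ U, (∀ u ∈ U, bform v (thetaB K n i u) = 0) → v = 0) := by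
  set f := oppositeFamily (K := K) h
  have hdiag : ∀ r s, r ≠ s → bformBilin K n (f r) (thetaB K n i (f s)) = 0 :=
    fun _ _ => bform_oppositeFamily_thetaB_of_ne h
  have hself : ∀ r, bformBilin K n (f r) (thetaB K n i (f r)) ≠ 0 :=
    bform_oppositeFamily_thetaB_self_ne_zero h hchar
  refine ⟨span K (Set.range f), fun x hx => ?_, ?_, fun v hv hvU => ?_⟩
  · exact qform_eq_zero_of_bform_self hchar
      ((bformBilin K n).apply_eq_zero_of_mem_span (bform_oppositeFamily h) hx hx)
  · rw [finrank_span_eq_card ((bformBilin K n).linearIndependent_of_pairing hdiag hself),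
      card_negIndex i]
  · exact (bformBilin K n).eq_zero_of_mem_span_of_pairing hdiag hself hv
      fun s => hvU _ (subset_span ⟨s, rfl⟩)

end Diagram

theorem parabolic_homology_has_diagram_Bni1_general
    {K : Type} [Field K] {n i : ℕ}
    (hchar : (2 : K) ≠ 0) (hi1 : 1 ≤ i) (hi2 : i ≤ n - 1) :
    -- θ preserves the form
    (∀ x : VB K n, qform (thetaB K n i x) = qform x) ∧
    (∀ x y : VB K n, bform (thetaB K n i x) (thetaB K n i y) = bform x y) ∧
    -- (a) some singular point is mapped to an opposite point
    (∃ v : VB K n, v ≠ 0 ∧ qform v = 0 ∧ bform v (thetaB K n i v) ≠ 0) ∧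
    -- (b) every totally singular subspace of dimension ≥ i+1 contains a nonzero fixed
    -- vector, hence is not mapped to an opposite
    (∀ U : Submodule K (VB K n), (∀ x ∈ U, qform x = 0) → i + 1 ≤ finrank K U →
      (∃ v ∈ U, v ≠ 0 ∧ thetaB K n i v = v) ∧
      ¬ (∀ v ∈ U, (∀ u ∈ U, bform v (thetaB K n i u) = 0) → v = 0)) ∧
    -- (c) θ maps some totally singular i-dimensional subspace U to an opposite,
    -- i.e. U ∩ (θU)^⊥ = 0
    (∃ U : Submodule K (VB K n), (∀ x ∈ U, qform x = 0) ∧ finrank K U = i ∧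
      (∀ v ∈ U, (∀ u ∈ U, bform v (thetaB K n i u) = 0) → v = 0)) := by
  have h : i < n := by omega
  refine ⟨qform_thetaB, bform_thetaB, exists_singular_opposite hchar h hi1, fun U hU hdim => ?_,
    exists_totallySingular_opposite hchar h⟩
  obtain ⟨v, hv, hv0, hfix⟩ := exists_thetaB_fixed_of_lt_finrank (by omega) hdim
  exact ⟨⟨v, hv, hv0, hfix⟩,
    fun hopp => hv0 (hopp v hv fun u hu => bform_thetaB_eq_zero_of_fixed hU hv hfix hu)⟩

theorem parabolic_homology_has_diagram_Bni1
    {K : Type} [Field K] {n i : ℕ}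
    (hchar : (2 : K) ≠ 0) (hn : 2 ≤ n) (hi1 : 1 ≤ i) (hi2 : i ≤ n - 1) :
    -- θ preserves the form
    (∀ x : VB K n, qform (thetaB K n i x) = qform x) ∧
    (∀ x y : VB K n, bform (thetaB K n i x) (thetaB K n i y) = bform x y) ∧
    -- (a) some singular point is mapped to an opposite point
    (∃ v : VB K n, v ≠ 0 ∧ qform v = 0 ∧ bform v (thetaB K n i v) ≠ 0) ∧
    -- (b) every totally singular subspace of dimension ≥ i+1 contains a nonzero fixed
    -- vector, hence is not mapped to an opposite
    (∀ U : Submodule K (VB K n), (∀ x ∈ U, qform x = 0) → i + 1 ≤ finrank K U →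
      (∃ v ∈ U, v ≠ 0 ∧ thetaB K n i v = v) ∧
      ¬ (∀ v ∈ U, (∀ u ∈ U, bform v (thetaB K n i u) = 0) → v = 0)) ∧
    -- (c) θ maps some totally singular i-dimensional subspace U to an opposite,
    -- i.e. U ∩ (θU)^⊥ = 0
    (∃ U : Submodule K (VB K n), (∀ x ∈ U, qform x = 0) ∧ finrank K U = i ∧
      (∀ v ∈ U, (∀ u ∈ U, bform v (thetaB K n i u) = 0) → v = 0)) :=
  parabolic_homology_has_diagram_Bni1_general hchar hi1 hi2
end
end

section
/- Let K be a field, n ≥ 4, and V = K^{2n} with the hyperbolic quadratic form Q(x) = Σ_{j=1}^n x_j x_{n+j}. Let θ be a point-domestic collineation of the associated orthogonal polar space, induced by a semilinear similitude g, with no fixed points (gv ∉ ⟨v⟩ for every singular v ≠ 0). Then: n is even; g may be taken to be K-linear; g has no eigenvector and g²v ∈ span{v, gv} for every v ∈ V, so the g-invariant 2-dimensional subspaces of V partition V∖{0} (θ extends to a collineation of PG(2n−1,K) pointwise fixing a line spread); equivalently, there exist t,d ∈ K with g² = t·g − d·id and X² − tX + d irreducible over K, so that the invariant lines form a projective space PG(n−1,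 L) over the quadratic extension L = K[X]/(X² − tX + d). Conversely, if n is even and K admits a quadratic extension, then the hyperbolic polar space of rank n over K admits a point-domestic collineation without fixed points of this form. -/
/-!
STATEMENT 12: V = K^{2n}, n ≥ 4, hyperbolic form Q(x) = ∑ⱼ xⱼx_{n+j}. If θ is a
point-domestic collineation of the hyperbolic polar space, induced by a semilinear
similitude g, with no fixed points, then: n is even; g may be taken to be K-linear
(the companion automorphism is trivial); g has no eigenvector and g²v ∈ span{v, gv}
for every v, so the g-invariant 2-dimensional subspaces partition V∖{0} (θ extends to
PG(2n−1,K) pointwise fixing a line spread); equivalently g² = t·g − d·id with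
X² − tX + d irreducible over K, so the invariant lines form PG(n−1,L) over the quadratic
extension L = K[X]/(X² − tX + d). Conversely, if n is even and K admits a quadratic
extension, then such a point-domestic fixed-point-free collineation exists.
-/

open Module Submodule Polynomial

noncomputable section

/-- `K^{2n}`, written as pairs of `n`-tuples. -/
abbrev Vh (K : Type) (n : ℕ) : Type := (Fin n → K) × (Fin n → K)

/-- The hyperbolic quadratic form `Q(x) = ∑ⱼ xⱼ x_{n+j}`. -/
def qh {K : Type} [Field K] {n : ℕ} (x : Vh K n) : K := ∑ j, x.1 j * x.2 j

/-- The polar form `B(x,y) = ∑ⱼ (xⱼ y_{n+j} + x_{n+j} yⱼ)`. -/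
def bh {K : Type} [Field K] {n : ℕ} (x y : Vh K n) : K :=
  ∑ j, (x.1 j * y.2 j + x.2 j * y.1 j)

/-- `g` is a `σ`-semilinear bijection of `K^{2n}` which is a similitude of the hyperbolic
quadratic form; such a `g` induces a collineation of the polar space of type `D_n`. -/
structure IsHyperbolicCollineation {K : Type} [Field K] {n : ℕ} (σ : K ≃+* K) (lam : K)
    (g : Vh K n → Vh K n) : Prop where
  bij : Function.Bijective g
  map_add : ∀ x y, g (x + y) = g x + g y
  map_smulc : ∀ (a : K) (x : Vh K n), g (a • x) = σ a • g x
  lam_ne : lam ≠ 0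
  sim : ∀ x, qh (g x) = lam * σ (qh x)

/-- θ (induced by g) is point-domestic: no singular point is mapped to an opposite. -/
def PointDomestic {K : Type} [Field K] {n : ℕ} (g : Vh K n → Vh K n) : Prop :=
  ∀ x : Vh K n, qh x = 0 → bh x (g x) = 0

/-- θ has no fixed points: `gv ∉ ⟨v⟩` for every singular `v ≠ 0`. -/
def NoFixedPoints {K : Type} [Field K] {n : ℕ} (g : Vh K n → Vh K n) : Prop :=
  ∀ v : Vh K n, v ≠ 0 → qh v = 0 → ∀ c : K, g v ≠ c • v


namespace HPnfp

variable {K : Type} [Field K] {n : ℕ}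

def ee (i : Fin n) : Vh K n := (Pi.single i 1, 0)
def ff (i : Fin n) : Vh K n := (0, Pi.single i 1)

lemma bh_comm (x y : Vh K n) : bh x y = bh y x := by
  unfold bh; exact Finset.sum_congr rfl fun j _ => by ring

lemma bh_add_left (x y z : Vh K n) : bh (x + y) z = bh x z + bh y z := by
  unfold bh
  rw [← Finset.sum_add_distrib]
  exact Finset.sum_congr rfl fun j _ => by
    simp only [Prod.fst_add, Prod.snd_add, Pi.add_apply]; ring

lemma bh_smul_left (a : K) (x z : Vh K n) : bh (a • x) z = a * bh x z := by
  unfold bh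
  rw [Finset.mul_sum]
  exact Finset.sum_congr rfl fun j _ => by
    simp only [Prod.smul_fst, Prod.smul_snd, Pi.smul_apply, smul_eq_mul]; ring

lemma bh_add_right (x y z : Vh K n) : bh x (y + z) = bh x y + bh x z := by
  rw [bh_comm, bh_add_left, bh_comm y x, bh_comm z x]

lemma bh_smul_right (a : K) (x z : Vh K n) : bh x (a • z) = a * bh x z := by
  rw [bh_comm, bh_smul_left, bh_comm]

lemma bh_neg_right (x z : Vh K n) : bh x (-z) = - bh x z := by
  have := bh_smul_right (-1 : K) x z
  simpa [neg_smul] using this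

lemma bh_sub_right (x y z : Vh K n) : bh x (y - z) = bh x y - bh x z := by
  rw [sub_eq_add_neg, bh_add_right, bh_neg_right, sub_eq_add_neg]

lemma bh_sub_left (x y z : Vh K n) : bh (x - y) z = bh x z - bh y z := by
  rw [bh_comm, bh_sub_right, bh_comm x z, bh_comm y z]

lemma qh_add (x y : Vh K n) : qh (x + y) = qh x + qh y + bh x y := by
  unfold qh bh
  rw [← Finset.sum_add_distrib, ← Finset.sum_add_distrib]
  exact Finset.sum_congr rfl fun j _ => by
    simp only [Prod.fst_add, Prod.snd_add, Pi.add_apply]; ring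

lemma qh_smul (a : K) (x : Vh K n) : qh (a • x) = a * (a * qh x) := by
  unfold qh
  have h : ∀ j ∈ Finset.univ, (a • x).1 j * (a • x).2 j = a * (a * (x.1 j * x.2 j)) :=
    fun j _ => by
      simp only [Prod.smul_fst, Prod.smul_snd, Pi.smul_apply, smul_eq_mul]; ring
  rw [Finset.sum_congr rfl h, ← Finset.mul_sum, ← Finset.mul_sum]

lemma qh_sub (x y : Vh K n) : qh (x - y) = qh x + qh y - bh x y := by
  have h1 : x - y = x + (-1 : K) • y := by
    rw [neg_smul, one_smul, sub_eq_add_neg]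
  rw [h1, qh_add, qh_smul, bh_smul_right]
  ring

@[simp] lemma bh_ee_right (x : Vh K n) (i : Fin n) : bh x (ee i) = x.2 i := by
  unfold bh ee
  simp [Pi.single_apply, mul_ite, Finset.sum_ite_eq']

@[simp] lemma bh_ff_right (x : Vh K n) (i : Fin n) : bh x (ff i) = x.1 i := by
  unfold bh ff
  simp [Pi.single_apply, mul_ite, Finset.sum_ite_eq']

@[simp] lemma bh_ee_left (x : Vh K n) (i : Fin n) : bh (ee i) x = x.2 i := by
  rw [bh_comm]; simp

@[simp] lemma bh_ff_left (x : Vh K n) (i : Fin n) : bh (ff i) x = x.1 i := by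
  rw [bh_comm]; simp

@[simp] lemma qh_ee (i : Fin n) : qh (ee (K := K) i) = 0 := by
  unfold qh ee; simp

@[simp] lemma qh_ff (i : Fin n) : qh (ff (K := K) i) = 0 := by
  unfold qh ff; simp

lemma bh_ee_ee (i j : Fin n) : bh (ee (K := K) i) (ee j) = 0 := by
  rw [bh_ee_left]; rfl

lemma bh_ff_ff (i j : Fin n) : bh (ff (K := K) i) (ff j) = 0 := by
  rw [bh_ff_left]; rfl

lemma bh_ee_ff (i j : Fin n) : bh (ee (K := K) i) (ff j) = (Pi.single i 1 : Fin n → K) j := by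
  rw [bh_ff_right]; rfl

lemma bh_ff_ee (i j : Fin n) : bh (ff (K := K) i) (ee j) = (Pi.single i 1 : Fin n → K) j := by
  rw [bh_ee_right]; rfl

lemma ee_ne_zero (i : Fin n) : (ee i : Vh K n) ≠ 0 := by
  intro h
  have := congrArg (fun z : Vh K n => z.1 i) h
  simp [ee] at this

lemma bh_left_cancel {w : Vh K n} (h : ∀ v, bh v w = 0) : w = 0 := by
  have h1 : ∀ i, w.1 i = 0 := fun i => by simpa using h (ff i)
  have h2 : ∀ i, w.2 i = 0 := fun i => by simpa using h (ee i)
  exact Prod.ext (funext h1) (funext h2)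

end HPnfp

namespace HPnfp

variable {K : Type} [Field K] {n : ℕ}

lemma quad_natDegree (c lam : K) : (X ^ 2 - C c * X + C lam).natDegree = 2 := by
  have h : (X ^ 2 - C c * X + C lam : K[X]) = C 1 * X ^ 2 + C (-c) * X + C lam := by
    rw [map_neg, map_one]; ring
  rw [h]
  exact natDegree_quadratic one_ne_zero

lemma eval_ne_of_irred {p : K[X]} (hdeg : p.natDegree = 2) (hirr : Irreducible p) (r : K) :
    p.eval r ≠ 0 := by
  intro h
  have hp0 : p ≠ 0 := fun h0 => by simp [h0] at hdeg
  obtain ⟨q, hq⟩ := dvd_iff_isRoot.2 h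
  rcases hirr.isUnit_or_isUnit hq with h1 | h1
  · have := natDegree_eq_zero_of_isUnit h1
    rw [natDegree_X_sub_C] at this
    omega
  · have hq0 : q ≠ 0 := by rintro rfl; rw [mul_zero] at hq; exact hp0 hq
    have hdd : p.natDegree = 1 + q.natDegree := by
      rw [hq, natDegree_mul (X_sub_C_ne_zero r) hq0, natDegree_X_sub_C]
    have := natDegree_eq_zero_of_isUnit h1
    omega

lemma root_of_not_irred (c lam : K) (h : ¬ Irreducible (X ^ 2 - C c * X + C lam : K[X])) :
    ∃ r : K, r * r - c * r + lam = 0 := by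
  set P : K[X] := X ^ 2 - C c * X + C lam with hP
  have hdeg : P.natDegree = 2 := quad_natDegree c lam
  have hP0 : P ≠ 0 := fun h0 => by simp [h0] at hdeg
  have hnu : ¬ IsUnit P := P.not_isUnit_of_natDegree_pos (by omega)
  rw [irreducible_iff] at h
  push_neg at h
  obtain ⟨a, b, hab, hna, hnb⟩ := h hnu
  have ha0 : a ≠ 0 := by rintro rfl; rw [zero_mul] at hab; exact hP0 hab
  have hb0 : b ≠ 0 := by rintro rfl; rw [mul_zero] at hab; exact hP0 hab
  have hsum : a.natDegree + b.natDegree = 2 := by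
    rw [← natDegree_mul ha0 hb0, ← hab, hdeg]
  have ha1' : 1 ≤ a.natDegree := by
    by_contra hlt
    have h0 : a.natDegree = 0 := by omega
    have : IsUnit a := by
      rw [eq_C_of_natDegree_eq_zero h0]
      refine isUnit_C.2 (isUnit_iff_ne_zero.2 fun hx => ha0 ?_)
      rw [eq_C_of_natDegree_eq_zero h0, hx, map_zero]
    exact hna this
  have hb1' : 1 ≤ b.natDegree := by
    by_contra hlt
    have h0 : b.natDegree = 0 := by omega
    have : IsUnit b := by
      rw [eq_C_of_natDegree_eq_zero h0]
      refine isUnit_C.2 (isUnit_iff_ne_zero.2 fun hx => hb0 ?_)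
      rw [eq_C_of_natDegree_eq_zero h0, hx, map_zero]
    exact hnb this
  have ha1 : a.natDegree = 1 := by omega
  obtain ⟨a1, a0, haf⟩ := exists_eq_X_add_C_of_natDegree_le_one (by omega : a.natDegree ≤ 1)
  have ha1ne : a1 ≠ 0 := by
    intro h0
    rw [h0, map_zero, zero_mul, zero_add] at haf
    rw [haf, natDegree_C] at ha1
    omega
  refine ⟨-a0 / a1, ?_⟩
  have heval : P.eval (-a0 / a1) = 0 := by
    rw [hab, eval_mul, haf]
    have : ((C a1 * X + C a0 : K[X])).eval (-a0 / a1) = 0 := by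
      simp only [eval_add, eval_mul, eval_C, eval_X]
      field_simp
      ring
    rw [this, zero_mul]
  have hev : P.eval (-a0 / a1) = (-a0 / a1) * (-a0 / a1) - c * (-a0 / a1) + lam := by
    simp only [hP, eval_add, eval_sub, eval_mul, eval_pow, eval_X, eval_C]
    ring
  rw [hev] at heval
  exact heval

lemma even_step {k : ℕ} (h : Even (k - 2)) (h2 : 2 ≤ k) : Even k := by
  obtain ⟨m, hm⟩ := h
  exact ⟨m + 1, by omega⟩

lemma finrank_span_pair' {V : Type} [AddCommGroup V] [Module K V] {x y : V}
    (h : LinearIndependent K ![x, y]) : finrank K (span K ({x, y} : Set V)) = 2 := by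
  have hr : Set.range ![x, y] = ({x, y} : Set V) := by
    ext z
    constructor
    · rintro ⟨i, rfl⟩
      fin_cases i <;> simp
    · rintro (rfl | rfl)
      · exact ⟨0, rfl⟩
      · exact ⟨1, rfl⟩
  have := finrank_span_eq_card (R := K) h
  rw [hr] at this
  simpa using this

lemma even_of_quad (c lam : K) (hnr : ∀ r : K, r * r - c * r + lam ≠ 0) :
    ∀ k : ℕ, ∀ (W : Type) [AddCommGroup W] [Module K W] [FiniteDimensional K W]
      (h : W →ₗ[K] W),
      (∀ w, h (h w) = c • h w - lam • w) → finrank K W = k → Even k := by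
  intro k
  induction k using Nat.strong_induction_on with
  | _ k IH =>
  intro W _ _ _ h hrel hrk
  rcases Nat.eq_zero_or_pos k with rfl | hk
  · exact Even.zero
  have hnt : Nontrivial W := by
    rw [← finrank_pos_iff (R := K)]
    omega
  obtain ⟨w, hw0⟩ := exists_ne (0 : W)
  have hind : LinearIndependent K ![w, h w] := by
    rw [LinearIndependent.pair_iff]
    intro s t hst
    by_cases ht : t = 0
    · subst ht
      rw [zero_smul, add_zero] at hst
      exact ⟨(smul_eq_zero.1 hst).resolve_right hw0, rfl⟩
    · exfalso
      have h1 : t • h w = -(s • w) := by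
        rw [add_comm] at hst
        exact eq_neg_of_add_eq_zero_left hst
      have hhw : h w = (-(t⁻¹ * s)) • w := by
        calc h w = t⁻¹ • (t • h w) := by rw [smul_smul, inv_mul_cancel₀ ht, one_smul]
        _ = t⁻¹ • (-(s • w)) := by rw [h1]
        _ = (-(t⁻¹ * s)) • w := by rw [smul_neg, smul_smul, neg_smul]
      set r : K := -(t⁻¹ * s) with hr
      have h2 := hrel w
      rw [hhw] at h2
      rw [map_smul, hhw, smul_smul, smul_smul] at h2
      have h3 : (r * r - c * r + lam) • w = 0 := by
        rw [add_smul, sub_smul, h2]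
        abel
      exact hnr r ((smul_eq_zero.1 h3).resolve_right hw0)
  set P2 : Submodule K W := span K ({w, h w} : Set W) with hP2
  have hx : w ∈ P2 := subset_span (Set.mem_insert _ _)
  have hy : h w ∈ P2 := subset_span (Set.mem_insert_of_mem _ rfl)
  have hinv : ∀ z ∈ P2, h z ∈ P2 := by
    intro z hz
    obtain ⟨a, b, hab⟩ := mem_span_pair.1 hz
    rw [← hab, map_add, map_smul, map_smul, hrel w]
    exact add_mem (smul_mem _ _ hy)
      (smul_mem _ _ (sub_mem (smul_mem _ _ hy) (smul_mem _ _ hx)))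
  have hP2rk : finrank K P2 = 2 := finrank_span_pair' hind
  have hle : P2 ≤ Submodule.comap h P2 := fun z hz => hinv z hz
  set hq : (W ⧸ P2) →ₗ[K] (W ⧸ P2) := Submodule.mapQ P2 P2 h hle with hhq
  have hrelq : ∀ z : W ⧸ P2, hq (hq z) = c • hq z - lam • z := by
    intro z
    obtain ⟨z, rfl⟩ := Submodule.mkQ_surjective P2 z
    simp only [hhq, Submodule.mkQ_apply, Submodule.mapQ_apply, hrel,
      Submodule.Quotient.mk_sub, Submodule.Quotient.mk_smul]
  have hqrk : finrank K (W ⧸ P2) = k - 2 := by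
    have := Submodule.finrank_quotient_add_finrank P2
    rw [hP2rk, hrk] at this
    omega
  have h2k : 2 ≤ k := by
    have := Submodule.finrank_le P2
    rw [hP2rk, hrk] at this
    omega
  exact even_step (IH (k - 2) (by omega) (W ⧸ P2) hq hrelq hqrk) h2k

end HPnfp

namespace HPnfp

variable {K : Type} [Field K] {n : ℕ}

lemma even_of_alt {V : Type} [AddCommGroup V] [Module K V] [FiniteDimensional K V]
    (β : V →ₗ[K] V →ₗ[K] K) :
    ∀ k : ℕ, ∀ U : Submodule K V, finrank K U = k →
      (∀ x ∈ U, β x x = 0) →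
      (∀ x ∈ U, (∀ y ∈ U, β x y = 0) → x = 0) → Even k := by
  intro k
  induction k using Nat.strong_induction_on with
  | _ k IH =>
  intro U hrk halt hnd
  rcases Nat.eq_zero_or_pos k with rfl | hk
  · exact Even.zero
  have hU : U ≠ ⊥ := by
    rintro rfl
    rw [finrank_bot] at hrk
    omega
  obtain ⟨x, hxU, hx0⟩ := Submodule.exists_mem_ne_zero_of_ne_bot hU
  obtain ⟨y0, hy0U, hxy0⟩ : ∃ y ∈ U, β x y ≠ 0 := by
    by_contra hcon
    push_neg at hcon
    exact hx0 (hnd x hxU hcon)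
  set y : V := (β x y0)⁻¹ • y0 with hy
  have hyU : y ∈ U := U.smul_mem _ hy0U
  have hxy : β x y = 1 := by
    rw [hy, map_smul, smul_eq_mul, inv_mul_cancel₀ hxy0]
  have hanti : ∀ u ∈ U, ∀ v ∈ U, β u v = - β v u := by
    intro u hu v hv
    have h0 := halt (u + v) (U.add_mem hu hv)
    simp only [map_add, LinearMap.add_apply] at h0
    rw [halt u hu, halt v hv] at h0
    linear_combination h0
  have hyx : β y x = -1 := by rw [hanti y hyU x hxU, hxy]
  set P2 : Submodule K V := span K ({x, y} : Set V) with hP2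
  have hxP : x ∈ P2 := subset_span (Set.mem_insert _ _)
  have hyP : y ∈ P2 := subset_span (Set.mem_insert_of_mem _ rfl)
  set U' : Submodule K V := U ⊓ LinearMap.ker (β x) ⊓ LinearMap.ker (β y) with hU'
  have hmemU' : ∀ z, z ∈ U' ↔ z ∈ U ∧ β x z = 0 ∧ β y z = 0 := by
    intro z
    simp [hU', Submodule.mem_inf, LinearMap.mem_ker, and_assoc]
  have hU'le : U' ≤ U := le_trans inf_le_left inf_le_left
  have hdecomp : ∀ u ∈ U, u - (β x u) • y + (β y u) • x ∈ U' := by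
    intro u hu
    rw [hmemU']
    refine ⟨U.add_mem (U.sub_mem hu (U.smul_mem _ hyU)) (U.smul_mem _ hxU), ?_, ?_⟩
    · have e : β x (u - (β x u) • y + (β y u) • x)
          = β x u - (β x u) * β x y + (β y u) * β x x := by
        simp only [map_add, map_sub, map_smul, smul_eq_mul]
      rw [e, hxy, halt x hxU]
      ring
    · have e : β y (u - (β x u) • y + (β y u) • x)
          = β y u - (β x u) * β y y + (β y u) * β y x := by
        simp only [map_add, map_sub, map_smul, smul_eq_mul]
      rw [e, hyx, halt y hyU]
      ring
  have hsup : U' ⊔ P2 = U := by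
    apply le_antisymm
    · refine sup_le hU'le (span_le.2 ?_)
      intro z hz
      rcases Set.mem_insert_iff.1 hz with rfl | hz
      · exact hxU
      · rw [Set.mem_singleton_iff.1 hz]
        exact hyU
    · intro u hu
      have h' := hdecomp u hu
      have hrep : u = (u - (β x u) • y + (β y u) • x) + ((β x u) • y - (β y u) • x) := by
        abel
      rw [hrep]
      exact Submodule.add_mem _ (Submodule.mem_sup_left h')
        (Submodule.mem_sup_right (sub_mem (smul_mem _ _ hyP) (smul_mem _ _ hxP)))
  have hinf : U' ⊓ P2 = ⊥ := by
    rw [eq_bot_iff]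
    intro z hz
    have hz1 : z ∈ U' := (Submodule.mem_inf.1 hz).1
    have hz2 : z ∈ P2 := (Submodule.mem_inf.1 hz).2
    obtain ⟨a, b, hab⟩ := mem_span_pair.1 hz2
    rw [hmemU'] at hz1
    obtain ⟨-, hzx, hzy⟩ := hz1
    have hb : b = 0 := by
      rw [← hab] at hzx
      simp only [map_add, map_smul, smul_eq_mul] at hzx
      rw [halt x hxU, hxy] at hzx
      linear_combination hzx
    have ha : a = 0 := by
      rw [← hab] at hzy
      simp only [map_add, map_smul, smul_eq_mul] at hzy
      rw [halt y hyU, hyx] at hzy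
      linear_combination -hzy
    have : z = 0 := by rw [← hab, ha, hb, zero_smul, zero_smul, add_zero]
    simp [this]
  have hxyind : LinearIndependent K ![x, y] := by
    rw [LinearIndependent.pair_iff]
    intro s t hst
    have h1 : β x (s • x + t • y) = 0 := by rw [hst]; simp
    have h2 : β y (s • x + t • y) = 0 := by rw [hst]; simp
    simp only [map_add, map_smul, smul_eq_mul] at h1 h2
    rw [halt x hxU, hxy] at h1
    rw [halt y hyU, hyx] at h2
    constructor
    · linear_combination -h2
    · linear_combination h1
  have hP2rk : finrank K P2 = 2 := finrank_span_pair' hxyind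
  have hfr : finrank K U' + 2 = k := by
    have h0 := Submodule.finrank_sup_add_finrank_inf_eq U' P2
    rw [hsup, hinf, hP2rk, finrank_bot, hrk, add_zero] at h0
    omega
  have hnd' : ∀ z ∈ U', (∀ w ∈ U', β z w = 0) → z = 0 := by
    intro z hz hzall
    apply hnd z (hU'le hz)
    intro w hw
    rw [← hsup] at hw
    obtain ⟨w1, hw1, w2, hw2, rfl⟩ := Submodule.mem_sup.1 hw
    obtain ⟨a, b, hab⟩ := mem_span_pair.1 hw2
    rw [hmemU'] at hz
    obtain ⟨hzU, hzx, hzy⟩ := hz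
    have hzx' : β z x = 0 := by rw [hanti z hzU x hxU, hzx, neg_zero]
    have hzy' : β z y = 0 := by rw [hanti z hzU y hyU, hzy, neg_zero]
    rw [map_add, ← hab, map_add, map_smul, map_smul, smul_eq_mul, smul_eq_mul,
      hzx', hzy', hzall w1 hw1]
    ring
  have halt' : ∀ z ∈ U', β z z = 0 := fun z hz => halt z (hU'le hz)
  exact even_step (by
    have := IH (finrank K U') (by omega) U' rfl halt' hnd'
    simpa [show k - 2 = finrank K U' by omega] using this) (by omega)

end HPnfp

namespace HPnfp

variable {K : Type} [Field K] {n : ℕ}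

lemma direct_part {σ : K ≃+* K} {lam : K} {g : Vh K n → Vh K n}
    (hn : 4 ≤ n) (hc : IsHyperbolicCollineation σ lam g)
    (hdom : PointDomestic g) (hfix : NoFixedPoints g) :
    Even n ∧ σ = RingEquiv.refl K ∧
      (¬ ∃ (c : K) (v : Vh K n), v ≠ 0 ∧ g v = c • v) ∧
      (∀ v : Vh K n, g (g v) ∈ span K {v, g v}) ∧
      (∀ v : Vh K n, v ≠ 0 → ∃! W : Submodule K (Vh K n),
        finrank K W = 2 ∧ (∀ x ∈ W, g x ∈ W) ∧ v ∈ W) ∧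
      (∃ t d : K, (∀ v : Vh K n, g (g v) = t • g v - d • v) ∧
        Irreducible (X ^ 2 - C t * X + C d : K[X])) := by
  have i0 : Fin n := ⟨0, by omega⟩
  have key : ∀ u v : Vh K n, qh u = 0 → qh v = 0 → bh u v = 0 →
      ∀ a : K, σ a * bh u (g v) + a * bh v (g u) = 0 := by
    intro u v hu hv huv a
    have hsing : qh (u + a • v) = 0 := by
      rw [qh_add, qh_smul, bh_smul_right, hu, hv, huv]; ring
    have hdq := hdom _ hsing
    rw [hc.map_add, hc.map_smulc] at hdq
    simp only [bh_add_left, bh_add_right, bh_smul_left, bh_smul_right] at hdq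
    rw [hdom u hu, hdom v hv] at hdq
    linear_combination hdq
  have hσ : σ = RingEquiv.refl K := by
    by_cases hall : ∀ u v : Vh K n, qh u = 0 → qh v = 0 → bh u v = 0 → bh u (g v) = 0
    · exfalso
      set w := g (ee i0 : Vh K n) with hw
      have h2 : ∀ i, w.2 i = 0 := by
        intro i
        have := hall (ee i) (ee i0) (qh_ee i) (qh_ee i0) (bh_ee_ee i i0)
        simpa using this
      have h1 : ∀ i, i ≠ i0 → w.1 i = 0 := by
        intro i hi
        have := hall (ff i) (ee i0) (qh_ff i) (qh_ee i0)
          (by rw [bh_ff_ee, Pi.single_eq_of_ne (Ne.symm hi)])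
        simpa using this
      apply hfix (ee i0) (ee_ne_zero i0) (qh_ee i0) (w.1 i0)
      show w = w.1 i0 • ee i0
      have hsm : w.1 i0 • (ee i0 : Vh K n) = (Pi.single i0 (w.1 i0), 0) := by
        unfold ee
        rw [Prod.smul_mk]
        congr 1
        · rw [← Pi.single_smul, smul_eq_mul, mul_one]
        · simp
      rw [hsm]
      refine Prod.ext (funext fun i => ?_) (funext fun i => ?_)
      · show w.1 i = (Pi.single i0 (w.1 i0) : Fin n → K) i
        by_cases hii : i = i0
        · subst hii; rw [Pi.single_eq_same]
        · rw [h1 i hii, Pi.single_eq_of_ne hii]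
      · show w.2 i = (0 : Fin n → K) i
        rw [h2 i]; rfl
    · push_neg at hall
      obtain ⟨u, v, hu, hv, huv, hne⟩ := hall
      have h1 := key u v hu hv huv 1
      rw [map_one, one_mul, one_mul] at h1
      apply RingEquiv.ext
      intro a
      have ha := key u v hu hv huv a
      have h2 : (σ a - a) * bh u (g v) = 0 := by linear_combination ha - a * h1
      rcases mul_eq_zero.1 h2 with h3 | h3
      · simpa using sub_eq_zero.1 h3
      · exact absurd h3 hne
  have gsmul : ∀ (a : K) (x : Vh K n), g (a • x) = a • g x := by
    intro a x
    have := hc.map_smulc a x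
    rw [hσ] at this
    simpa using this
  have gsim : ∀ x, qh (g x) = lam * qh x := by
    intro x
    have := hc.sim x
    rw [hσ] at this
    simpa using this
  have gadd := hc.map_add
  have gsub : ∀ x y, g (x - y) = g x - g y := by
    intro x y
    have h1 : x - y = x + (-1 : K) • y := by rw [neg_smul, one_smul, sub_eq_add_neg]
    rw [h1, gadd, gsmul, neg_smul, one_smul, ← sub_eq_add_neg]
  let G : Vh K n →ₗ[K] Vh K n :=
    { toFun := g, map_add' := gadd, map_smul' := fun a x => by simp [gsmul a x] }
  let Sb : Vh K n →ₗ[K] Vh K n →ₗ[K] K := LinearMap.mk₂ K (fun x y => bh x (g y) + bh y (g x))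
    (fun x x' y => by
      simp only [bh_add_left, bh_add_right, gadd]; ring)
    (fun a x y => by
      simp only [smul_eq_mul, bh_smul_left, bh_smul_right, gsmul]; ring)
    (fun x y y' => by
      simp only [bh_add_left, bh_add_right, gadd]; ring)
    (fun a x y => by
      simp only [smul_eq_mul, bh_smul_left, bh_smul_right, gsmul]; ring)
  have hSb : ∀ x y, Sb x y = bh x (g y) + bh y (g x) := fun x y => rfl
  set cc : K := bh (ee i0) (g (ff i0)) + bh (ff i0) (g (ee i0)) with hcc
  have hperp : ∀ u v : Vh K n, qh u = 0 → qh v = 0 → bh u v = 0 → Sb u v = 0 := by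
    intro u v hu hv huv
    have := key u v hu hv huv 1
    rw [map_one, one_mul, one_mul] at this
    rw [hSb]
    exact this
  have hSsymm : ∀ x y, Sb x y = Sb y x := fun x y => by rw [hSb, hSb, add_comm]
  have hzee : ∀ i j : Fin n, Sb (ee i) (ee j) = 0 := fun i j =>
    hperp _ _ (qh_ee i) (qh_ee j) (bh_ee_ee i j)
  have hzff : ∀ i j : Fin n, Sb (ff i) (ff j) = 0 := fun i j =>
    hperp _ _ (qh_ff i) (qh_ff j) (bh_ff_ff i j)
  have hzef : ∀ i j : Fin n, i ≠ j → Sb (ee i) (ff j) = 0 := fun i j hij =>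
    hperp _ _ (qh_ee i) (qh_ff j)
      (by rw [bh_ee_ff, Pi.single_eq_of_ne (Ne.symm hij)])
  have hpair : ∀ i : Fin n, Sb (ee i) (ff i) = cc := by
    intro i
    by_cases h0 : i = i0
    · subst h0
      rw [hSb, hcc]
    · have hb1 : bh (ee i : Vh K n) (ff i0) = 0 := by
        rw [bh_ee_ff, Pi.single_eq_of_ne (Ne.symm h0)]
      have hb2 : bh (ff i : Vh K n) (ee i0) = 0 := by
        rw [bh_ff_ee, Pi.single_eq_of_ne (Ne.symm h0)]
      have hqu : qh ((ee i : Vh K n) + ff i0) = 0 := by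
        rw [qh_add, qh_ee, qh_ff, hb1]; ring
      have hqv : qh ((ff i : Vh K n) - ee i0) = 0 := by
        rw [qh_sub, qh_ff, qh_ee, hb2]; ring
      have hbuv : bh ((ee i : Vh K n) + ff i0) ((ff i : Vh K n) - ee i0) = 0 := by
        rw [bh_add_left, bh_sub_right, bh_sub_right, bh_ee_ff, bh_ee_ee, bh_ff_ff,
          bh_ff_ee, Pi.single_eq_same, Pi.single_eq_same]
        ring
      have h4 := hperp _ _ hqu hqv hbuv
      simp only [map_add, map_sub, LinearMap.add_apply, LinearMap.sub_apply] at h4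
      have z1 : Sb (ee i) (ee i0) = 0 := hzee i i0
      have z2 : Sb (ff i0) (ff i) = 0 := hzff i0 i
      have z3 : Sb (ff i0) (ee i0) = cc := by rw [hSsymm, hSb, hcc]
      rw [z1, z2, z3] at h4
      linear_combination h4
  have hR : ∀ x y : Vh K n, bh x (g y) + bh y (g x) = cc * bh x y := by
    have hmaps : Sb = cc • LinearMap.mk₂ K (bh (K := K) (n := n))
        bh_add_left bh_smul_left bh_add_right bh_smul_right := by
      set Bb : Vh K n →ₗ[K] Vh K n →ₗ[K] K :=
        LinearMap.mk₂ K bh bh_add_left bh_smul_left bh_add_right bh_smul_right with hBbd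
      show Sb = cc • Bb
      have hBb : ∀ x y : Vh K n, Bb x y = bh x y := fun x y => rfl
      let bV : Basis (Fin n ⊕ Fin n) K (Vh K n) :=
        (Pi.basisFun K (Fin n)).prod (Pi.basisFun K (Fin n))
      have hbe : ∀ i, bV (Sum.inl i) = ee i := by
        intro i
        simp only [bV, Basis.prod_apply, Sum.elim_inl, Function.comp_apply,
          Pi.basisFun_apply, LinearMap.inl_apply]
        rfl
      have hbf : ∀ i, bV (Sum.inr i) = ff i := by
        intro i
        simp only [bV, Basis.prod_apply, Sum.elim_inr, Function.comp_apply,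
          Pi.basisFun_apply, LinearMap.inr_apply]
        rfl
      refine bV.ext fun p => bV.ext fun q => ?_
      rcases p with i | i <;> rcases q with j | j <;>
        simp only [hbe, hbf, LinearMap.smul_apply, smul_eq_mul]
      · rw [hzee, hBb, bh_ee_ee, mul_zero]
      · by_cases hij : i = j
        · subst hij
          rw [hpair, hBb, bh_ee_ff, Pi.single_eq_same, mul_one]
        · rw [hzef i j hij, hBb, bh_ee_ff, Pi.single_eq_of_ne (Ne.symm hij), mul_zero]
      · by_cases hij : i = j
        · subst hij
          rw [hSsymm, hpair, hBb, bh_ff_ee, Pi.single_eq_same, mul_one]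
        · rw [hSsymm, hzef j i (Ne.symm hij), hBb, bh_ff_ee,
            Pi.single_eq_of_ne (Ne.symm hij), mul_zero]
      · rw [hzff, hBb, bh_ff_ff, mul_zero]
    intro x y
    have h5 := LinearMap.congr_fun (LinearMap.congr_fun hmaps x) y
    rw [← hSb x y]
    simpa [LinearMap.mk₂_apply, LinearMap.smul_apply, smul_eq_mul] using h5
  have hBg : ∀ x y, bh (g x) (g y) = lam * bh x y := by
    intro x y
    have h1 := gsim (x + y)
    rw [gadd, qh_add, qh_add, gsim, gsim] at h1
    linear_combination h1
  have hgg : ∀ x, g (g x) = cc • g x - lam • x := by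
    intro x
    have hv : ∀ v, bh v (g (g x) - (cc • g x - lam • x)) = 0 := by
      intro v
      rw [bh_sub_right, bh_sub_right, bh_smul_right, bh_smul_right]
      have h1 := hR v (g x)
      have h2 : bh (g x) (g v) = lam * bh x v := hBg x v
      have h3 : bh v x = bh x v := bh_comm v x
      linear_combination h1 - h2 + lam * h3
    exact sub_eq_zero.1 (bh_left_cancel hv)
  have hnoroot : ∀ r : K, r * r - cc * r + lam ≠ 0 := by
    intro r hr
    have hbv : bh (ee i0 : Vh K n) (g (ee i0)) = 0 := hdom _ (qh_ee i0)
    have hqgv : qh (g (ee i0 : Vh K n)) = 0 := by rw [gsim, qh_ee, mul_zero]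
    set u : Vh K n := g (ee i0) - (cc - r) • (ee i0) with hu
    have hqu : qh u = 0 := by
      rw [hu, qh_sub, qh_smul, bh_smul_right, hqgv, qh_ee, bh_comm, hbv]
      ring
    have hune : u ≠ 0 := by
      intro h0
      rw [hu, sub_eq_zero] at h0
      exact hfix (ee i0) (ee_ne_zero i0) (qh_ee i0) (cc - r) h0
    have hgu : g u = r • u := by
      rw [hu, gsub, gsmul, hgg]
      have hlam : lam = r * (cc - r) := by linear_combination hr
      rw [hlam]
      module
    exact hfix u hune hqu r hgu
  have hirr : Irreducible (X ^ 2 - C cc * X + C lam : K[X]) := by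
    by_contra hni
    obtain ⟨r, hr⟩ := root_of_not_irred cc lam hni
    exact hnoroot r hr
  have hnoeig : ¬ ∃ (c' : K) (v : Vh K n), v ≠ 0 ∧ g v = c' • v := by
    rintro ⟨r, v, hv0, hveq⟩
    have h1 : g (g v) = (r * r) • v := by rw [hveq, gsmul, hveq, smul_smul]
    have h2 := hgg v
    rw [h1, hveq, smul_smul] at h2
    have h3 : (r * r - cc * r + lam) • v = 0 := by
      rw [add_smul, sub_smul, h2]
      abel
    exact hnoroot r ((smul_eq_zero.1 h3).resolve_right hv0)
  have hspan : ∀ v : Vh K n, g (g v) ∈ span K ({v, g v} : Set (Vh K n)) := by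
    intro v
    rw [hgg v]
    exact sub_mem (smul_mem _ _ (subset_span (Set.mem_insert_of_mem _ rfl)))
      (smul_mem _ _ (subset_span (Set.mem_insert _ _)))
  have huniq : ∀ v : Vh K n, v ≠ 0 → ∃! W : Submodule K (Vh K n),
      finrank K W = 2 ∧ (∀ x ∈ W, g x ∈ W) ∧ v ∈ W := by
    intro v hv0
    have hind : LinearIndependent K ![v, g v] :=
      (LinearIndependent.pair_iff' hv0).2 (fun a ha => hnoeig ⟨a, v, hv0, ha.symm⟩)
    have h1 : v ∈ span K ({v, g v} : Set (Vh K n)) := subset_span (Set.mem_insert _ _)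
    have h2 : g v ∈ span K ({v, g v} : Set (Vh K n)) :=
      subset_span (Set.mem_insert_of_mem _ rfl)
    refine ⟨span K {v, g v}, ⟨finrank_span_pair' hind, ?_, h1⟩, ?_⟩
    · intro x hx
      obtain ⟨a, b, hab⟩ := mem_span_pair.1 hx
      rw [← hab, gadd, gsmul, gsmul, hgg v]
      exact add_mem (smul_mem _ _ h2)
        (smul_mem _ _ (sub_mem (smul_mem _ _ h2) (smul_mem _ _ h1)))
    · rintro W ⟨hW2, hWinv, hvW⟩
      have hle : span K ({v, g v} : Set (Vh K n)) ≤ W := by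
        rw [span_le]
        intro z hz
        rcases Set.mem_insert_iff.1 hz with rfl | hz
        · exact hvW
        · rw [Set.mem_singleton_iff.1 hz]
          exact hWinv v hvW
      exact (Submodule.eq_of_le_of_finrank_eq hle
        (by rw [hW2, finrank_span_pair' hind])).symm
  -- parity
  set M : Submodule K (Vh K n) := LinearMap.range (LinearMap.inl K (Fin n → K) (Fin n → K))
    with hM
  have hmemM : ∀ x : Vh K n, x ∈ M ↔ x.2 = 0 := by
    intro x
    constructor
    · rintro ⟨u, rfl⟩
      rfl
    · intro h2
      exact ⟨x.1, Prod.ext rfl h2.symm⟩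
  have hMrank : finrank K M = n := by
    rw [hM, LinearMap.finrank_range_of_inj LinearMap.inl_injective]
    simp
  have hMsing : ∀ x ∈ M, qh x = 0 := by
    intro x hx
    rw [hmemM] at hx
    unfold qh
    refine Finset.sum_eq_zero fun j _ => ?_
    rw [hx]
    simp
  have hMbh : ∀ x ∈ M, ∀ y ∈ M, bh x y = 0 := by
    intro x hx y hy
    rw [hmemM] at hx hy
    unfold bh
    refine Finset.sum_eq_zero fun j _ => ?_
    rw [hx, hy]
    simp
  set M0 : Submodule K (Vh K n) := M ⊓ Submodule.comap G M with hM0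
  have hmemM0 : ∀ x, x ∈ M0 ↔ x ∈ M ∧ g x ∈ M := by
    intro x
    rw [hM0, Submodule.mem_inf, Submodule.mem_comap]
    rfl
  have hM0M : M0 ≤ M := inf_le_left
  have hM0inv : ∀ x ∈ M0, G x ∈ M0 := by
    intro x hx
    rw [hmemM0] at hx
    rw [show G x = g x from rfl, hmemM0]
    refine ⟨hx.2, ?_⟩
    rw [hgg x]
    exact M.sub_mem (M.smul_mem _ hx.2) (M.smul_mem _ hx.1)
  have heM0 : Even (finrank K M0) := by
    refine even_of_quad cc lam hnoroot (finrank K M0) M0 (G.restrict hM0inv) ?_ rfl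
    intro w
    apply Subtype.ext
    have hw : G (G (w : Vh K n)) = cc • G w - lam • (w : Vh K n) := hgg (w : Vh K n)
    simpa [LinearMap.restrict_apply] using hw
  set M0' : Submodule K ↥M := M0.comap M.subtype with hM0'
  obtain ⟨C', hC'⟩ := Submodule.exists_isCompl M0'
  set Cm : Submodule K (Vh K n) := C'.map M.subtype with hCm
  have hmap0 : M0'.map M.subtype = M0 := by
    rw [hM0', Submodule.map_comap_subtype]
    exact inf_eq_right.2 hM0M
  have hsupC : Cm ⊔ M0 = M := by
    rw [hCm, ← hmap0, ← Submodule.map_sup, sup_comm C' M0', hC'.sup_eq_top,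
      Submodule.map_subtype_top]
  have hinfC : Cm ⊓ M0 = ⊥ := by
    rw [hCm, ← hmap0, ← Submodule.map_inf _ (Submodule.injective_subtype M),
      inf_comm C' M0', hC'.inf_eq_bot, Submodule.map_bot]
  have hCmM : Cm ≤ M := by
    rw [hCm]
    exact Submodule.map_subtype_le M C'
  have heCm : Even (finrank K Cm) := by
    set Bg : Vh K n →ₗ[K] Vh K n →ₗ[K] K := LinearMap.mk₂ K (fun x y => bh x (g y))
      (fun x x' y => by simp only [bh_add_left])
      (fun a x y => by simp only [smul_eq_mul, bh_smul_left])
      (fun x y y' => by simp only [gadd, bh_add_right])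
      (fun a x y => by simp only [gsmul, smul_eq_mul, bh_smul_right]) with hBgd
    have hBgapp : ∀ x y, Bg x y = bh x (g y) := fun x y => rfl
    refine even_of_alt Bg (finrank K Cm) Cm rfl ?_ ?_
    · intro x hx
      rw [hBgapp]
      exact hdom x (hMsing x (hCmM hx))
    · intro x hx hxall
      have hxall' : ∀ y ∈ Cm, bh x (g y) = 0 := fun y hy => by
        have := hxall y hy
        rwa [hBgapp] at this
      have hxM : x ∈ M := hCmM hx
      have hallM : ∀ y ∈ M, bh x (g y) = 0 := by
        intro y hy
        rw [← hsupC] at hy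
        obtain ⟨y1, hy1, y2, hy2, rfl⟩ := Submodule.mem_sup.1 hy
        have h2 : g y2 ∈ M := ((hmemM0 y2).1 hy2).2
        rw [gadd, bh_add_right, hxall' y1 hy1, hMbh x hxM _ h2, add_zero]
      have hgxM : g x ∈ M := by
        rw [hmemM]
        funext i
        have he : (ee i : Vh K n) ∈ M := (hmemM _).2 rfl
        have h7 := hallM (ee i) he
        have h8 : bh (ee i : Vh K n) x = 0 := by
          rw [bh_ee_left, (hmemM x).1 hxM]
          rfl
        have h9 := hR (ee i) x
        rw [h7, h8, mul_zero, add_zero] at h9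
        calc (g x).2 i = bh (ee i) (g x) := (bh_ee_left _ i).symm
        _ = 0 := h9
      have hxM0 : x ∈ M0 := (hmemM0 x).2 ⟨hxM, hgxM⟩
      have hxbot : x ∈ Cm ⊓ M0 := Submodule.mem_inf.2 ⟨hx, hxM0⟩
      rw [hinfC] at hxbot
      simpa using hxbot
  have hfrM : finrank K Cm + finrank K M0 = n := by
    have h0 := Submodule.finrank_sup_add_finrank_inf_eq Cm M0
    rw [hsupC, hinfC, finrank_bot, hMrank, add_zero] at h0
    omega
  have heN : Even n := by
    obtain ⟨p1, hp1⟩ := heCm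
    obtain ⟨p2, hp2⟩ := heM0
    exact ⟨p1 + p2, by omega⟩
  exact ⟨heN, hσ, hnoeig, hspan, huniq, cc, lam, hgg, hirr⟩

end HPnfp

namespace HPnfp

variable {K : Type} [Field K] {n : ℕ}

lemma converse_part (hev : Even n) {p : K[X]} (hpdeg : p.degree = 2) (hpirr : Irreducible p) :
    ∃ (σ : K ≃+* K) (lam : K) (g : Vh K n → Vh K n),
      IsHyperbolicCollineation σ lam g ∧ PointDomestic g ∧ NoFixedPoints g := by
  obtain ⟨m, hm⟩ := hev
  have hpnd : p.natDegree = 2 := natDegree_eq_of_degree_eq_some hpdeg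
  have hp0 : p ≠ 0 := fun h => by rw [h, degree_zero] at hpdeg; simp at hpdeg
  have ha2 : p.coeff 2 ≠ 0 := by
    have := Polynomial.leadingCoeff_ne_zero.2 hp0
    rwa [Polynomial.leadingCoeff, hpnd] at this
  set t : K := -(p.coeff 1 / p.coeff 2) with ht
  set d : K := p.coeff 0 / p.coeff 2 with hd
  have heval : ∀ r : K, p.eval r = p.coeff 0 + p.coeff 1 * r + p.coeff 2 * r ^ 2 := by
    intro r
    have h1 : p.eval r = ∑ i ∈ Finset.range (2 + 1), p.coeff i * r ^ i := by
      rw [Polynomial.eval_eq_sum_range, hpnd]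
    rw [h1, Finset.sum_range_succ, Finset.sum_range_succ, Finset.sum_range_one]
    ring
  have hnr : ∀ r : K, r * r - t * r + d ≠ 0 := by
    intro r h0
    have h1 : p.coeff 2 * (r * r - t * r + d) = p.eval r := by
      rw [heval, ht, hd]
      field_simp
      ring
    have hev0 : p.eval r = 0 := by rw [← h1, h0, mul_zero]
    exact eval_ne_of_irred hpnd hpirr r hev0
  have hd0 : d ≠ 0 := fun h0 => hnr 0 (by rw [h0]; ring)
  have hm2 : n = m * 2 := by omega
  set E : Fin n ≃ Fin m × Fin 2 := (finCongr hm2).trans finProdFinEquiv.symm with hE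
  set A : (Fin n → K) → Fin n → K := fun u j =>
    if (E j).2 = 0 then -d * u (E.symm ((E j).1, 1))
    else u (E.symm ((E j).1, 0)) + t * u (E.symm ((E j).1, 1)) with hA
  set D : (Fin n → K) → Fin n → K := fun u j =>
    if (E j).2 = 0 then t * u (E.symm ((E j).1, 0)) - u (E.symm ((E j).1, 1))
    else d * u (E.symm ((E j).1, 0)) with hD
  set g : Vh K n → Vh K n := fun x => (A x.1, D x.2) with hg
  have hA0 : ∀ (u : Fin n → K) (i : Fin m),
      A u (E.symm (i, 0)) = -d * u (E.symm (i, 1)) := by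
    intro u i
    simp [hA]
  have hA1 : ∀ (u : Fin n → K) (i : Fin m),
      A u (E.symm (i, 1)) = u (E.symm (i, 0)) + t * u (E.symm (i, 1)) := by
    intro u i
    simp [hA]
  have hD0 : ∀ (u : Fin n → K) (i : Fin m),
      D u (E.symm (i, 0)) = t * u (E.symm (i, 0)) - u (E.symm (i, 1)) := by
    intro u i
    simp [hD]
  have hD1 : ∀ (u : Fin n → K) (i : Fin m),
      D u (E.symm (i, 1)) = d * u (E.symm (i, 0)) := by
    intro u i
    simp [hD]
  have hsum : ∀ F : Fin n → K,
      ∑ j, F j = ∑ i : Fin m, (F (E.symm (i, 0)) + F (E.symm (i, 1))) := by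
    intro F
    rw [← Equiv.sum_comp E.symm F, Fintype.sum_prod_type]
    exact Finset.sum_congr rfl fun i _ => by rw [Fin.sum_univ_two]
  have hgadd : ∀ x y : Vh K n, g (x + y) = g x + g y := by
    intro x y
    refine Prod.ext (funext fun j => ?_) (funext fun j => ?_) <;>
      simp only [hg, hA, hD, Prod.fst_add, Prod.snd_add, Pi.add_apply] <;>
      split_ifs <;> ring
  have hgsmul : ∀ (a : K) (x : Vh K n), g (a • x) = a • g x := by
    intro a x
    refine Prod.ext (funext fun j => ?_) (funext fun j => ?_) <;>
      simp only [hg, hA, hD, Prod.smul_fst, Prod.smul_snd, Pi.smul_apply, smul_eq_mul] <;>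
      split_ifs <;> ring
  have hgsub : ∀ x y : Vh K n, g (x - y) = g x - g y := by
    intro x y
    have h1 : x - y = x + (-1 : K) • y := by rw [neg_smul, one_smul, sub_eq_add_neg]
    rw [h1, hgadd, hgsmul, neg_smul, one_smul, ← sub_eq_add_neg]
  have hqg : ∀ x : Vh K n, qh (g x) = d * qh x := by
    intro x
    unfold qh
    simp only [hg]
    rw [hsum (fun j => A x.1 j * D x.2 j), hsum (fun j => x.1 j * x.2 j), Finset.mul_sum]
    refine Finset.sum_congr rfl fun i _ => ?_
    rw [hA0, hA1, hD0, hD1]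
    ring
  have hbg : ∀ x : Vh K n, bh x (g x) = t * qh x := by
    intro x
    unfold bh qh
    simp only [hg]
    rw [hsum (fun j => x.1 j * D x.2 j + x.2 j * A x.1 j),
      hsum (fun j => x.1 j * x.2 j), Finset.mul_sum]
    refine Finset.sum_congr rfl fun i _ => ?_
    rw [hA0, hA1, hD0, hD1]
    ring
  have fin2cases : ∀ k : Fin 2, k ≠ 0 → k = 1 := by
    intro k hk
    have h2 := k.isLt
    have h3 : k.val ≠ 0 := fun hv => hk (Fin.ext hv)
    exact Fin.ext (by omega)
  have hAA : ∀ (u : Fin n → K) (j : Fin n), A (A u) j = t * A u j - d * u j := by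
    intro u j
    have hj : j = E.symm (E j) := (E.symm_apply_apply j).symm
    by_cases hk : (E j).2 = 0
    · have hEj : E j = ((E j).1, (0 : Fin 2)) := Prod.ext rfl hk
      rw [hj, hEj, hA0, hA1, hA0]
      ring
    · have hEj : E j = ((E j).1, (1 : Fin 2)) := Prod.ext rfl (fin2cases _ hk)
      rw [hj, hEj, hA1, hA0, hA1]
      ring
  have hDD : ∀ (u : Fin n → K) (j : Fin n), D (D u) j = t * D u j - d * u j := by
    intro u j
    have hj : j = E.symm (E j) := (E.symm_apply_apply j).symm
    by_cases hk : (E j).2 = 0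
    · have hEj : E j = ((E j).1, (0 : Fin 2)) := Prod.ext rfl hk
      rw [hj, hEj, hD0, hD1, hD0]
    · have hEj : E j = ((E j).1, (1 : Fin 2)) := Prod.ext rfl (fin2cases _ hk)
      rw [hj, hEj, hD1, hD0, hD1]
      ring
  have hg2 : ∀ x : Vh K n, g (g x) = t • g x - d • x := by
    intro x
    refine Prod.ext (funext fun j => ?_) (funext fun j => ?_) <;>
      simp only [hg, Prod.fst_sub, Prod.snd_sub, Prod.smul_fst, Prod.smul_snd,
        Pi.sub_apply, Pi.smul_apply, smul_eq_mul]
    · exact hAA x.1 j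
    · exact hDD x.2 j
  have hcalc : ∀ x : Vh K n, d⁻¹ • (t • g x - g (g x)) = x := by
    intro x
    rw [hg2, sub_sub_cancel, smul_smul, inv_mul_cancel₀ hd0, one_smul]
  have hbij : Function.Bijective g := by
    refine Function.bijective_iff_has_inverse.2 ⟨fun x => d⁻¹ • (t • x - g x), ?_, ?_⟩
    · intro x
      exact hcalc x
    · intro x
      rw [hgsmul, hgsub, hgsmul]
      exact hcalc x
  have hnf : NoFixedPoints g := by
    intro v hv0 _ r hr
    have h1 : g (g v) = (r * r) • v := by rw [hr, hgsmul, hr, smul_smul]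
    have h2 := hg2 v
    rw [h1, hr, smul_smul] at h2
    have h3 : (r * r - t * r + d) • v = 0 := by
      rw [add_smul, sub_smul, h2]
      abel
    exact hnr r ((smul_eq_zero.1 h3).resolve_right hv0)
  have hpd : PointDomestic g := fun x hx => by rw [hbg, hx, mul_zero]
  exact ⟨RingEquiv.refl K, d, g,
    ⟨hbij, hgadd, fun a x => by rw [hgsmul]; rfl, hd0, fun x => by rw [hqg]; rfl⟩, hpd, hnf⟩

end HPnfp

theorem hyperbolic_pointDomestic_no_fixed_points
    (K : Type) [Field K] (n : ℕ) (hn : 4 ≤ n) :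
    -- direct statement
    (∀ (σ : K ≃+* K) (lam : K) (g : Vh K n → Vh K n),
      IsHyperbolicCollineation σ lam g → PointDomestic g → NoFixedPoints g →
      (Even n ∧
       -- g may be taken to be K-linear: the companion automorphism is trivial
       σ = RingEquiv.refl K ∧
       -- g has no eigenvector …
       (¬ ∃ (c : K) (v : Vh K n), v ≠ 0 ∧ g v = c • v) ∧
       -- … and g²v ∈ span{v, gv} for every v …
       (∀ v : Vh K n, g (g v) ∈ span K {v, g v}) ∧
       -- … so the g-invariant 2-dimensional subspaces partition V∖{0} (a line spread)
       (∀ v : Vh K n, v ≠ 0 → ∃! W : Submodule K (Vh K n),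
         finrank K W = 2 ∧ (∀ x ∈ W, g x ∈ W) ∧ v ∈ W) ∧
       -- equivalently g² = t·g − d·id with X² − tX + d irreducible over K (so the
       -- invariant lines form PG(n−1, L) over L = K[X]/(X² − tX + d))
       (∃ t d : K, (∀ v : Vh K n, g (g v) = t • g v - d • v) ∧
         Irreducible (X ^ 2 - C t * X + C d : K[X])))) ∧
    -- converse statement
    ((Even n ∧ ∃ p : K[X], p.degree = 2 ∧ Irreducible p) →
      ∃ (σ : K ≃+* K) (lam : K) (g : Vh K n → Vh K n),
        IsHyperbolicCollineation σ lam g ∧ PointDomestic g ∧ NoFixedPoints g) := by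
  constructor
  · intro σ lam g hc hd hf
    exact HPnfp.direct_part hn hc hd hf
  · rintro ⟨hev, p, hpdeg, hpirr⟩
    exact HPnfp.converse_part hev hpdeg hpirr
end
end

section
/- Let K be a field, n ≥ 4, and let (V,Q) be a nondegenerate quadratic space with V = K^{2n+1} and Q of Witt index n (a parabolic, i.e. split type B_n, polar space). Then the associated orthogonal polar space admits no point-domestic collineation without fixed points: every collineation θ, induced by a semilinear similitude g, satisfying B(x,gx) = 0 for every singular x must fix a point, i.e. gv ∈ ⟨v⟩ for some singular v ≠ 0. -/
/-!
STATEMENT 14: Let V = K^{2n+1}, n ≥ 4, with a nondegenerate quadratic form Q of Witt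
index n (a parabolic, split type B_n, polar space). Then every point-domestic collineation
θ of the associated orthogonal polar space, induced by a semilinear similitude g, fixes a
point: gv ∈ ⟨v⟩ for some singular v ≠ 0.
-/

open Module Submodule

noncomputable section

/-- The polar form `B(x,y) = Q(x+y) − Q(x) − Q(y)` of a quadratic form. -/
def polarOf {K : Type*} [Field K] {V : Type*} [AddCommGroup V] [Module K V]
    (Q : QuadraticForm K V) (x y : V) : K :=
  Q (x + y) - Q x - Q y


section PolarAPI

variable {K : Type} [Field K] {V : Type} [AddCommGroup V] [Module K V]
variable (Q : QuadraticForm K V)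

lemma polarOf_eq_polar (x y : V) : polarOf Q x y = QuadraticMap.polar Q x y := rfl

lemma polarOf_eq_bilin (x y : V) :
    polarOf Q x y = QuadraticMap.polarBilin Q x y := by
  rw [QuadraticMap.polarBilin_apply_apply]; rfl

lemma pol_comm (x y : V) : polarOf Q x y = polarOf Q y x :=
  QuadraticMap.polar_comm _ x y

lemma pol_add_left (x x' y : V) :
    polarOf Q (x + x') y = polarOf Q x y + polarOf Q x' y :=
  QuadraticMap.polar_add_left Q x x' y

lemma pol_add_right (x y y' : V) :
    polarOf Q x (y + y') = polarOf Q x y + polarOf Q x y' :=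
  QuadraticMap.polar_add_right Q x y y'

lemma pol_smul_left (a : K) (x y : V) :
    polarOf Q (a • x) y = a * polarOf Q x y := by
  rw [polarOf_eq_polar, QuadraticMap.polar_smul_left, smul_eq_mul, polarOf_eq_polar]

lemma pol_smul_right (a : K) (x y : V) :
    polarOf Q x (a • y) = a * polarOf Q x y := by
  rw [polarOf_eq_polar, QuadraticMap.polar_smul_right, smul_eq_mul, polarOf_eq_polar]

lemma pol_self (x : V) : polarOf Q x x = 2 * Q x := by
  rw [polarOf_eq_polar, QuadraticMap.polar_self, two_smul]; ring

lemma pol_zero_left (y : V) : polarOf Q 0 y = 0 := by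
  have := pol_smul_left Q (0 : K) 0 y
  rwa [zero_smul, zero_mul] at this

lemma pol_zero_right (x : V) : polarOf Q x 0 = 0 := by
  rw [pol_comm]; exact pol_zero_left Q x

lemma pol_sub_left (x x' y : V) :
    polarOf Q (x - x') y = polarOf Q x y - polarOf Q x' y := by
  have h := pol_add_left Q (x - x') x' y
  rw [sub_add_cancel] at h
  linear_combination -h

lemma pol_sub_right (x y y' : V) :
    polarOf Q x (y - y') = polarOf Q x y - polarOf Q x y' := by
  rw [pol_comm, pol_sub_left, pol_comm Q y x, pol_comm Q y' x]

lemma Q_add (x y : V) : Q (x + y) = Q x + Q y + polarOf Q x y :=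
  QuadraticMap.map_add Q x y

lemma Q_smul (a : K) (x : V) : Q (a • x) = a * a * Q x := by
  rw [QuadraticMap.map_smul, smul_eq_mul]

lemma pol_sum_right {ι : Type} (s : Finset ι) (x : V) (v : ι → V) :
    polarOf Q x (∑ i ∈ s, v i) = ∑ i ∈ s, polarOf Q x (v i) := by
  simp only [polarOf_eq_bilin]
  rw [map_sum]

lemma pol_sum_left {ι : Type} (s : Finset ι) (y : V) (v : ι → V) :
    polarOf Q (∑ i ∈ s, v i) y = ∑ i ∈ s, polarOf Q (v i) y := by
  rw [pol_comm, pol_sum_right]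
  exact Finset.sum_congr rfl fun i _ => pol_comm Q y (v i)

end PolarAPI

section Hyperbolic

variable {K : Type} [Field K] {V : Type} [AddCommGroup V] [Module K V] [FiniteDimensional K V]
variable (Q : QuadraticForm K V)

omit [FiniteDimensional K V] in
lemma pol_zero_on (U : Submodule K V) (hU : ∀ x ∈ U, Q x = 0) :
    ∀ x ∈ U, ∀ y ∈ U, polarOf Q x y = 0 := by
  intro x hx y hy
  have h : Q (x + y) = 0 := hU _ (U.add_mem hx hy)
  rw [Q_add, hU x hx, hU y hy] at h
  linear_combination h

lemma hyperbolic_family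
    (hnd : ∀ v : V, (∀ w : V, polarOf Q v w = 0) → Q v = 0 → v = 0)
    (U : Submodule K V) (hU : ∀ x ∈ U, Q x = 0) {n : ℕ} (hUr : finrank K U = n) :
    ∀ k : ℕ, k ≤ n → ∃ e f : Fin k → V,
      (∀ i, e i ∈ U) ∧ (∀ i, Q (f i) = 0) ∧
      (∀ i j, polarOf Q (f i) (f j) = 0) ∧
      (∀ i j, polarOf Q (e i) (f j) = if i = j then 1 else 0) := by
  intro k
  induction k with
  | zero => exact fun _ => ⟨Fin.elim0, Fin.elim0, fun i => i.elim0, fun i => i.elim0,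
      fun i => i.elim0, fun i => i.elim0⟩
  | succ k ih =>
    intro hk
    obtain ⟨e, f, heU, hQf, hff, hef⟩ := ih (by omega)
    have hUU := pol_zero_on Q U hU
    -- pick a nonzero vector of U orthogonal to all f i
    set φ : U →ₗ[K] (Fin k → K) :=
      LinearMap.pi (fun i => (QuadraticMap.polarBilin Q (f i)).comp U.subtype) with hφ
    have hker : 0 < finrank K (LinearMap.ker φ) := by
      have h1 := LinearMap.finrank_range_add_finrank_ker φ
      have h2 : finrank K (LinearMap.range φ) ≤ k := by
        calc finrank K (LinearMap.range φ) ≤ finrank K (Fin k → K) :=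
              (LinearMap.range φ).finrank_le
          _ = k := Module.finrank_fin_fun K
      rw [hUr] at h1
      omega
    haveI : Nontrivial (LinearMap.ker φ) := Module.finrank_pos_iff.mp hker
    obtain ⟨x', hx'⟩ := exists_ne (0 : LinearMap.ker φ)
    set x : V := ((x' : U) : V) with hxdef
    have hxU : x ∈ U := (x' : U).2
    have hxne : x ≠ 0 := by
      simp only [hxdef, ne_eq, Submodule.coe_eq_zero]
      exact hx'
    have hQx : Q x = 0 := hU x hxU
    have hfx : ∀ i, polarOf Q (f i) x = 0 := by
      intro i
      have h0 : φ (x' : U) = 0 := x'.2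
      have h1 := congrFun h0 i
      simp [hφ, LinearMap.pi_apply, ← polarOf_eq_bilin] at h1
      exact h1
    obtain ⟨w, hw⟩ : ∃ w : V, polarOf Q x w ≠ 0 := by
      by_contra h
      push_neg at h
      exact hxne (hnd x h hQx)
    set w₁ : V := (polarOf Q x w)⁻¹ • w with hw₁def
    have hxw₁ : polarOf Q x w₁ = 1 := by
      rw [hw₁def, pol_smul_right, inv_mul_cancel₀ hw]
    set w₂ : V := w₁ - (∑ j, polarOf Q (f j) w₁ • e j)
        - (∑ j, polarOf Q (e j) w₁ • f j) with hw₂def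
    have expand : ∀ v : V, polarOf Q v w₂ = polarOf Q v w₁
        - (∑ j, polarOf Q (f j) w₁ * polarOf Q v (e j))
        - (∑ j, polarOf Q (e j) w₁ * polarOf Q v (f j)) := by
      intro v
      rw [hw₂def, pol_sub_right, pol_sub_right, pol_sum_right, pol_sum_right]
      simp only [pol_smul_right]
    have hfw₂ : ∀ i, polarOf Q (f i) w₂ = 0 := by
      intro i
      rw [expand]
      have h1 : ∀ j, polarOf Q (f j) w₁ * polarOf Q (f i) (e j)
          = if j = i then polarOf Q (f j) w₁ else 0 := by
        intro j
        rw [pol_comm Q (f i) (e j), hef]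
        by_cases h : j = i <;> simp [h]
      rw [Finset.sum_congr rfl (fun j _ => h1 j), Finset.sum_ite_eq' Finset.univ i]
      simp [hff]
    have hew₂ : ∀ i, polarOf Q (e i) w₂ = 0 := by
      intro i
      rw [expand]
      have h1 : ∀ j, polarOf Q (e j) w₁ * polarOf Q (e i) (f j)
          = if j = i then polarOf Q (e j) w₁ else 0 := by
        intro j
        rw [hef]
        by_cases h : i = j
        · subst h; simp
        · rw [if_neg (fun hh : j = i => h hh.symm), if_neg h, mul_zero]
      rw [Finset.sum_congr rfl (fun j _ => h1 j), Finset.sum_ite_eq' Finset.univ i]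
      have h2 : ∀ j, polarOf Q (f j) w₁ * polarOf Q (e i) (e j) = 0 := by
        intro j
        rw [hUU _ (heU i) _ (heU j), mul_zero]
      rw [Finset.sum_congr rfl (fun j _ => h2 j)]
      simp
    have hxw₂ : polarOf Q x w₂ = 1 := by
      rw [expand, hxw₁]
      have h1 : ∀ j, polarOf Q (f j) w₁ * polarOf Q x (e j) = 0 := fun j => by
        rw [hUU _ hxU _ (heU j), mul_zero]
      have h2 : ∀ j, polarOf Q (e j) w₁ * polarOf Q x (f j) = 0 := fun j => by
        rw [pol_comm Q x (f j), hfx j, mul_zero]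
      rw [Finset.sum_congr rfl (fun j _ => h1 j), Finset.sum_congr rfl (fun j _ => h2 j)]
      simp
    set fk : V := w₂ + (-(Q w₂)) • x with hfkdef
    have hBw₂x : polarOf Q w₂ x = 1 := by rw [pol_comm]; exact hxw₂
    have hQfk : Q fk = 0 := by
      rw [hfkdef, Q_add, Q_smul, hQx, pol_smul_right, hBw₂x]
      ring
    have hffk : ∀ i, polarOf Q (f i) fk = 0 := by
      intro i; rw [hfkdef, pol_add_right, pol_smul_right, hfx i, hfw₂ i]; ring
    have hefk : ∀ i, polarOf Q (e i) fk = 0 := by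
      intro i; rw [hfkdef, pol_add_right, pol_smul_right, hUU _ (heU i) _ hxU, hew₂ i]; ring
    have hxfk : polarOf Q x fk = 1 := by
      rw [hfkdef, pol_add_right, pol_smul_right, hxw₂, pol_self, hQx]; ring
    have hfkfk : polarOf Q fk fk = 0 := by rw [pol_self, hQfk]; ring
    refine ⟨Fin.snoc e x, Fin.snoc f fk, ?_, ?_, ?_, ?_⟩
    · refine Fin.lastCases ?_ ?_
      · simpa using hxU
      · intro j; simpa using heU j
    · refine Fin.lastCases ?_ ?_
      · simpa using hQfk
      · intro j; simpa using hQf j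
    · intro i j
      refine Fin.lastCases ?_ (fun i' => ?_) i
      · refine Fin.lastCases ?_ (fun j' => ?_) j
        · simpa using hfkfk
        · simp only [Fin.snoc_last, Fin.snoc_castSucc]
          rw [pol_comm]; exact hffk j'
      · refine Fin.lastCases ?_ (fun j' => ?_) j
        · simp only [Fin.snoc_last, Fin.snoc_castSucc]
          exact hffk i'
        · simp only [Fin.snoc_castSucc]
          exact hff i' j'
    · intro i j
      refine Fin.lastCases ?_ (fun i' => ?_) i
      · refine Fin.lastCases ?_ (fun j' => ?_) j
        · simp only [Fin.snoc_last, if_pos rfl]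
          exact hxfk
        · simp only [Fin.snoc_last, Fin.snoc_castSucc]
          rw [if_neg (Fin.castSucc_lt_last j').ne', pol_comm]
          exact hfx j'
      · refine Fin.lastCases ?_ (fun j' => ?_) j
        · simp only [Fin.snoc_last, Fin.snoc_castSucc]
          rw [if_neg (Fin.castSucc_lt_last i').ne]
          exact hefk i'
        · simp only [Fin.snoc_castSucc]
          rw [hef i' j']
          congr 1
          simp [Fin.castSucc_inj]
    
end Hyperbolic

section Basis

variable {K : Type} [Field K] {V : Type} [AddCommGroup V] [Module K V] [FiniteDimensional K V]
variable (Q : QuadraticForm K V)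

lemma exists_hyperbolic_basis
    (hnd : ∀ v : V, (∀ w : V, polarOf Q v w = 0) → Q v = 0 → v = 0)
    (U : Submodule K V) (hU : ∀ x ∈ U, Q x = 0) {n : ℕ} (hUr : finrank K U = n)
    (hVr : finrank K V = 2 * n + 1) :
    ∃ (e f : Fin n → V) (u₀ : V),
      (∀ i, Q (e i) = 0) ∧ (∀ i, Q (f i) = 0) ∧
      (∀ i j, polarOf Q (e i) (e j) = 0) ∧
      (∀ i j, polarOf Q (f i) (f j) = 0) ∧
      (∀ i j, polarOf Q (e i) (f j) = if i = j then 1 else 0) ∧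
      (∀ i, polarOf Q (e i) u₀ = 0) ∧ (∀ i, polarOf Q (f i) u₀ = 0) ∧
      Q u₀ ≠ 0 ∧
      (∀ w : V, ∃ (a b : Fin n → K) (t : K),
        w = (∑ i, a i • e i) + (∑ i, b i • f i) + t • u₀) := by
  obtain ⟨e, f, heU, hQf, hff, hef⟩ :=
    hyperbolic_family Q hnd U hU hUr n le_rfl
  have hUU := pol_zero_on Q U hU
  have hQe : ∀ i, Q (e i) = 0 := fun i => hU _ (heU i)
  have hee : ∀ i j, polarOf Q (e i) (e j) = 0 := fun i j => hUU _ (heU i) _ (heU j)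
  -- combination computations
  have hfcomb : ∀ (a b : Fin n → K) (i : Fin n),
      polarOf Q (f i) ((∑ j, a j • e j) + (∑ j, b j • f j)) = a i := by
    intro a b i
    rw [pol_add_right, pol_sum_right, pol_sum_right]
    simp only [pol_smul_right]
    have h1 : ∀ j, a j * polarOf Q (f i) (e j) = if j = i then a j else 0 := by
      intro j
      rw [pol_comm, hef]
      by_cases h : j = i <;> simp [h]
    have h2 : ∀ j, b j * polarOf Q (f i) (f j) = 0 := fun j => by rw [hff, mul_zero]
    rw [Finset.sum_congr rfl fun j _ => h1 j, Finset.sum_congr rfl fun j _ => h2 j,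
      Finset.sum_ite_eq' Finset.univ i]
    simp
  have hecomb : ∀ (a b : Fin n → K) (i : Fin n),
      polarOf Q (e i) ((∑ j, a j • e j) + (∑ j, b j • f j)) = b i := by
    intro a b i
    rw [pol_add_right, pol_sum_right, pol_sum_right]
    simp only [pol_smul_right]
    have h1 : ∀ j, a j * polarOf Q (e i) (e j) = 0 := fun j => by rw [hee, mul_zero]
    have h2 : ∀ j, b j * polarOf Q (e i) (f j) = if j = i then b j else 0 := by
      intro j
      rw [hef]
      by_cases h : i = j
      · subst h; simp
      · rw [if_neg h, if_neg (fun hh : j = i => h hh.symm), mul_zero]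
    rw [Finset.sum_congr rfl fun j _ => h1 j, Finset.sum_congr rfl fun j _ => h2 j,
      Finset.sum_ite_eq' Finset.univ i]
    simp
  set Φ : V →ₗ[K] (Fin n → K) × (Fin n → K) :=
    LinearMap.prod (LinearMap.pi fun i => QuadraticMap.polarBilin Q (f i))
      (LinearMap.pi fun i => QuadraticMap.polarBilin Q (e i)) with hΦdef
  have hΦval : ∀ v : V, Φ v = (fun i => polarOf Q (f i) v, fun i => polarOf Q (e i) v) := by
    intro v
    rw [hΦdef]
    refine Prod.ext ?_ ?_ <;> funext i <;>
      · simp only [LinearMap.prod_apply, LinearMap.pi_apply]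
        exact (polarOf_eq_bilin Q _ v).symm
  have hΦsurj : Function.Surjective Φ := by
    intro p
    refine ⟨(∑ j, p.1 j • e j) + (∑ j, p.2 j • f j), ?_⟩
    rw [hΦval]
    refine Prod.ext ?_ ?_ <;> funext i
    · exact hfcomb p.1 p.2 i
    · exact hecomb p.1 p.2 i
  have hker1 : finrank K (LinearMap.ker Φ) = 1 := by
    have h1 := LinearMap.finrank_range_add_finrank_ker Φ
    have hcod : finrank K ((Fin n → K) × (Fin n → K)) = n + n := by
      rw [Module.finrank_prod, Module.finrank_fin_fun K]
    rw [LinearMap.range_eq_top.mpr hΦsurj, finrank_top, hcod, hVr] at h1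
    omega
  haveI : Nontrivial (LinearMap.ker Φ) := Module.finrank_pos_iff (R := K) |>.mp (by omega)
  obtain ⟨u', hu'⟩ := exists_ne (0 : LinearMap.ker Φ)
  set u₀ : V := (u' : V) with hu₀def
  have hu₀ne : u₀ ≠ 0 := by
    simp only [hu₀def, ne_eq, Submodule.coe_eq_zero]
    exact hu'
  have hu₀ker : Φ u₀ = 0 := u'.2
  have hfu : ∀ i, polarOf Q (f i) u₀ = 0 := by
    intro i
    have h1 := congrFun (congrArg Prod.fst hu₀ker) i
    rw [hΦval] at h1
    exact h1
  have heu : ∀ i, polarOf Q (e i) u₀ = 0 := by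
    intro i
    have h1 := congrFun (congrArg Prod.snd hu₀ker) i
    rw [hΦval] at h1
    exact h1
  have hspan_ker : (K ∙ u₀) = LinearMap.ker Φ := by
    refine Submodule.eq_of_le_of_finrank_le ?_ ?_
    · rw [Submodule.span_singleton_le_iff_mem]
      exact LinearMap.mem_ker.mpr hu₀ker
    · rw [hker1, finrank_span_singleton hu₀ne]
  have hdecomp : ∀ w : V, ∃ (a b : Fin n → K) (t : K),
      w = (∑ i, a i • e i) + (∑ i, b i • f i) + t • u₀ := by
    intro w
    have h1 := hfcomb (fun i => polarOf Q (f i) w) (fun i => polarOf Q (e i) w)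
    have h2 := hecomb (fun i => polarOf Q (f i) w) (fun i => polarOf Q (e i) w)
    have hr : w - ((∑ j, polarOf Q (f j) w • e j) + (∑ j, polarOf Q (e j) w • f j))
        ∈ LinearMap.ker Φ := by
      rw [LinearMap.mem_ker, map_sub, hΦval, hΦval, Prod.mk_sub_mk, Prod.mk_eq_zero]
      constructor
      · rw [sub_eq_zero]; funext i; exact (h1 i).symm
      · rw [sub_eq_zero]; funext i; exact (h2 i).symm
    rw [← hspan_ker, Submodule.mem_span_singleton] at hr
    obtain ⟨t, ht⟩ := hr
    refine ⟨fun i => polarOf Q (f i) w, fun i => polarOf Q (e i) w, t, ?_⟩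
    rw [ht]
    abel
  have hQu₀ : Q u₀ ≠ 0 := by
    intro h0
    apply hu₀ne
    apply hnd u₀ ?_ h0
    intro w
    obtain ⟨a, b, t, rfl⟩ := hdecomp w
    rw [pol_add_right, pol_add_right, pol_sum_right, pol_sum_right]
    simp only [pol_smul_right]
    have h1 : ∀ j, a j * polarOf Q u₀ (e j) = 0 := fun j => by
      rw [pol_comm, heu, mul_zero]
    have h2 : ∀ j, b j * polarOf Q u₀ (f j) = 0 := fun j => by
      rw [pol_comm, hfu, mul_zero]
    rw [Finset.sum_congr rfl fun j _ => h1 j, Finset.sum_congr rfl fun j _ => h2 j,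
      pol_self, h0]
    simp
  exact ⟨e, f, u₀, hQe, hQf, hee, hff, hef, heu, hfu, hQu₀, hdecomp⟩

end Basis

section EvenDim

variable {K : Type} [Field K]

lemma even_finrank_of_quadratic_rel (A lam : K)
    (hirr : ∀ c : K, c * c - A * c + lam ≠ 0) :
    ∀ (m : ℕ) (M : Type) [AddCommGroup M] [Module K M] [FiniteDimensional K M]
      (fL : M →ₗ[K] M), (∀ x, fL (fL x) = A • fL x - lam • x) →
      finrank K M = m → Even m := by
  intro m
  induction m using Nat.strong_induction_on with
  | _ m ih =>
    intro M _ _ _ fL hfL hm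
    rcases Nat.eq_zero_or_pos m with h0 | hpos
    · exact h0 ▸ Even.zero
    haveI : Nontrivial M := Module.finrank_pos_iff (R := K) |>.mp (by omega)
    obtain ⟨v, hv⟩ := exists_ne (0 : M)
    have hind : LinearIndependent K ![v, fL v] := by
      rw [LinearIndependent.pair_iff]
      intro s t hst
      by_cases ht : t = 0
      · subst ht
        rw [zero_smul, add_zero] at hst
        rcases smul_eq_zero.mp hst with hs | hveq
        · exact ⟨hs, rfl⟩
        · exact absurd hveq hv
      · exfalso
        have h1 : t • fL v = (-s) • v := by
          rw [neg_smul]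
          exact eq_neg_of_add_eq_zero_right hst
        have hfv : fL v = (-s * t⁻¹) • v := by
          have := congrArg (fun z => t⁻¹ • z) h1
          simp only [smul_smul, inv_mul_cancel₀ ht, one_smul] at this
          rw [this, mul_comm]
        set c : K := -s * t⁻¹ with hc
        have h2 : fL (fL v) = (c * c) • v := by
          rw [hfv, map_smul, hfv, smul_smul]
        have h3 : fL (fL v) = (A * c - lam) • v := by
          rw [hfL, hfv, smul_smul, sub_smul]
        have h5 : (c * c) • v = (A * c) • v - lam • v := by
          rw [← h2, h3, sub_smul]
        have h4 : (c * c - A * c + lam) • v = 0 := by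
          rw [add_smul, sub_smul, h5]
          abel
        rcases smul_eq_zero.mp h4 with hcoef | hveq
        · exact hirr c hcoef
        · exact hv hveq
    set W : Submodule K M := Submodule.span K (Set.range ![v, fL v]) with hW
    have hvW : v ∈ W := Submodule.subset_span ⟨0, rfl⟩
    have hfvW : fL v ∈ W := Submodule.subset_span ⟨1, rfl⟩
    have hWinv : W ≤ W.comap fL := by
      rw [hW, Submodule.span_le, Set.range_subset_iff]
      intro i
      fin_cases i
      · exact Submodule.mem_comap.mpr hfvW
      · refine Submodule.mem_comap.mpr ?_
        show fL (fL v) ∈ W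
        rw [hfL]
        exact Submodule.sub_mem _ (Submodule.smul_mem _ _ hfvW) (Submodule.smul_mem _ _ hvW)
    have hWr : finrank K W = 2 := by
      rw [hW, finrank_span_eq_card hind]
      simp
    have hm2 : 2 ≤ m := by
      have hle := W.finrank_le
      rw [hWr, hm] at hle
      exact hle
    have hq : finrank K (M ⧸ W) = m - 2 := by
      have hqf := Submodule.finrank_quotient_add_finrank W
      rw [hWr, hm] at hqf
      omega
    set fQ : M ⧸ W →ₗ[K] M ⧸ W := Submodule.mapQ W W fL hWinv with hfQdef
    have hfQ : ∀ x, fQ (fQ x) = A • fQ x - lam • x := by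
      intro x
      obtain ⟨y, rfl⟩ := Submodule.Quotient.mk_surjective W x
      rw [hfQdef, Submodule.mapQ_apply, Submodule.mapQ_apply, hfL]
      simp [← Submodule.mkQ_apply, map_sub, map_smul]
    have hev := ih (m - 2) (by omega) (M ⧸ W) fQ hfQ hq
    obtain ⟨r, hr⟩ := hev
    exact ⟨r + 1, by omega⟩

end EvenDim

theorem parabolic_pointDomestic_has_fixed_point
    {K : Type} [Field K] {n : ℕ} (hn : 4 ≤ n)
    (Q : QuadraticForm K (Fin (2 * n + 1) → K))
    -- Q is nondegenerate:
    (hnd : ∀ v : Fin (2 * n + 1) → K,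
      (∀ w : Fin (2 * n + 1) → K, polarOf Q v w = 0) → Q v = 0 → v = 0)
    -- Q has Witt index n:
    (hwitt₁ : ∃ U : Submodule K (Fin (2 * n + 1) → K),
      (∀ x ∈ U, Q x = 0) ∧ finrank K U = n)
    (hwitt₂ : ∀ U : Submodule K (Fin (2 * n + 1) → K),
      (∀ x ∈ U, Q x = 0) → finrank K U ≤ n)
    -- g is a σ-semilinear bijection, a similitude of Q, inducing the collineation θ:
    (σ : K ≃+* K) (lam : K) (g : (Fin (2 * n + 1) → K) → (Fin (2 * n + 1) → K))
    (hbij : Function.Bijective g)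
    (hadd : ∀ x y, g (x + y) = g x + g y)
    (hsmul : ∀ (a : K) x, g (a • x) = σ a • g x)
    (hlam : lam ≠ 0)
    (hsim : ∀ x, Q (g x) = lam * σ (Q x))
    -- θ is point-domestic:
    (hpd : ∀ x : Fin (2 * n + 1) → K, Q x = 0 → polarOf Q x (g x) = 0) :
    ∃ v : Fin (2 * n + 1) → K, v ≠ 0 ∧ Q v = 0 ∧ ∃ c : K, g v = c • v := by
  classical
  obtain ⟨U, hU, hUr⟩ := hwitt₁
  have hVr : finrank K (Fin (2 * n + 1) → K) = 2 * n + 1 := Module.finrank_fin_fun K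
  obtain ⟨e, f, u₀, hQe, hQf, hee, hff, hef, heu, hfu, hQu₀, hdecomp⟩ :=
    exists_hyperbolic_basis Q hnd U hU hUr hVr
  set q := Q u₀ with hq
  haveI : NeZero n := ⟨by omega⟩
  have h01 : (0 : Fin n) ≠ 1 := by
    intro h
    have h2 := congrArg Fin.val h
    rw [Fin.val_zero, Fin.val_one', Nat.mod_eq_of_lt (by omega)] at h2
    exact absurd h2 (by omega)
  have he0ne : e 0 ≠ 0 := by
    intro h
    have h1 := hef 0 0
    rw [h, pol_zero_left, if_pos rfl] at h1
    exact one_ne_zero h1.symm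
  have hQg0 : ∀ x, Q x = 0 → Q (g x) = 0 := fun x hx => by
    rw [hsim, hx, map_zero, mul_zero]
  have L1 : ∀ x y, Q x = 0 → Q y = 0 → polarOf Q x y = 0 →
      polarOf Q x (g y) + polarOf Q y (g x) = 0 := by
    intro x y hx hy hxy
    have hxy0 : Q (x + y) = 0 := by rw [Q_add, hx, hy, hxy]; ring
    have h := hpd (x + y) hxy0
    rw [hadd] at h
    rw [pol_add_left, pol_add_right, pol_add_right, hpd x hx, hpd y hy] at h
    linear_combination h
  have hsvec : ∀ i : Fin n, Q (e i + (-q) • f i + u₀) = 0 := by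
    intro i
    rw [Q_add, Q_add, Q_smul, hQe, hQf, pol_smul_right, hef, if_pos rfl,
      pol_add_left, pol_smul_left, heu, hfu, ← hq]
    ring
  have hreform : ∀ u v w : Fin (2 * n + 1) → K, ∀ A : K,
      u + (-A) • v + lam • w = 0 → u = A • v - lam • w := by
    intro u v w A h
    have h1 : u + (-A) • v = -(lam • w) := eq_neg_of_add_eq_zero_left h
    have h2 : u = -(lam • w) - (-A) • v := eq_sub_of_add_eq h1
    rw [h2]; module
  by_cases hσ : ∀ a : K, σ a = a
  · -- σ = id : g is K-linear
    set gL : (Fin (2 * n + 1) → K) →ₗ[K] (Fin (2 * n + 1) → K) :=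
      { toFun := g, map_add' := hadd,
        map_smul' := fun a x => by
          show g (a • x) = (RingHom.id K) a • g x
          rw [hsmul, hσ]
          rfl } with hgL
    have hgLapp : ∀ x, gL x = g x := fun _ => rfl
    have Bpres : ∀ x y, polarOf Q (g x) (g y) = lam * polarOf Q x y := by
      intro x y
      simp only [polarOf]
      rw [← hadd, hsim, hsim, hsim, hσ, hσ, hσ]
      ring
    set BL := QuadraticMap.polarBilin Q with hBL
    set DL : _ →ₗ[K] _ →ₗ[K] K := BL.compl₂ gL + BL ∘ₗ gL with hDL
    have hDLval : ∀ x y, DL x y = polarOf Q x (g y) + polarOf Q (g x) y := by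
      intro x y
      simp only [hDL, LinearMap.add_apply, LinearMap.compl₂_apply, LinearMap.comp_apply,
        hgLapp, hBL, ← polarOf_eq_bilin]
    have DLsymm : ∀ x y, DL x y = DL y x := by
      intro x y
      rw [hDLval, hDLval, pol_comm Q x (g y), pol_comm Q (g x) y]
      ring
    have DLself : ∀ x, Q x = 0 → DL x x = 0 := by
      intro x hx
      rw [hDLval, pol_comm Q (g x) x, hpd x hx]
      ring
    have L1' : ∀ x y, Q x = 0 → Q y = 0 → polarOf Q x y = 0 → DL x y = 0 := by
      intro x y hx hy hxy
      rw [hDLval]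
      have h := L1 x y hx hy hxy
      rw [pol_comm Q y (g x)] at h
      linear_combination h
    set A := DL (e 0) (f 0) with hA
    have hDee : ∀ i j, DL (e i) (e j) = 0 := fun i j => L1' _ _ (hQe i) (hQe j) (hee i j)
    have hDff : ∀ i j, DL (f i) (f j) = 0 := fun i j => L1' _ _ (hQf i) (hQf j) (hff i j)
    have hDef0 : ∀ i j, i ≠ j → DL (e i) (f j) = 0 := fun i j hij =>
      L1' _ _ (hQe i) (hQf j) (by rw [hef, if_neg hij])
    have hkey : ∀ i j, i ≠ j → DL (e i) (f i) = DL (e j) (f j) := by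
      intro i j hij
      have hx : Q (e i + f j) = 0 := by
        rw [Q_add, hQe, hQf, hef, if_neg hij]; ring
      have hy : Q (e j - f i) = 0 := by
        rw [sub_eq_add_neg, ← neg_one_smul K (f i), Q_add, Q_smul, hQe, hQf,
          pol_smul_right, hef, if_neg (fun h : j = i => hij h.symm)]
        ring
      have hxy : polarOf Q (e i + f j) (e j - f i) = 0 := by
        rw [pol_add_left, pol_sub_right, pol_sub_right, hee, hef, if_pos rfl,
          pol_comm Q (f j) (e j), hef, if_pos rfl, pol_comm Q (f j) (f i), hff]
        ring
      have h0 := L1' _ _ hx hy hxy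
      have hexp : DL (e i + f j) (e j - f i)
          = DL (e i) (e j) - DL (e i) (f i) + DL (f j) (e j) - DL (f j) (f i) := by
        simp only [map_add, map_sub, LinearMap.add_apply, LinearMap.sub_apply]
        ring
      rw [hexp, hDee, hDff, DLsymm (f j) (e j)] at h0
      linear_combination -h0
    have hDefA : ∀ i, DL (e i) (f i) = A := by
      intro i
      by_cases h : i = 0
      · rw [h, hA]
      · rw [hkey i 0 h, hA]
    have hDue : ∀ i, DL u₀ (e i) = 0 := by
      intro i
      set j : Fin n := if i = 0 then 1 else 0 with hj
      have hij : i ≠ j := by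
        rw [hj]; by_cases h : i = 0
        · rw [if_pos h, h]; exact h01
        · rw [if_neg h]; exact h
      have hBxy : polarOf Q (e j + (-q) • f j + u₀) (e i) = 0 := by
        rw [pol_add_left, pol_add_left, pol_smul_left, hee,
          pol_comm Q (f j) (e i), hef, if_neg hij,
          pol_comm Q u₀ (e i), heu]
        ring
      have h0 := L1' _ _ (hsvec j) (hQe i) hBxy
      have hexp : DL (e j + (-q) • f j + u₀) (e i)
          = DL (e j) (e i) + (-q) * DL (f j) (e i) + DL u₀ (e i) := by
        simp only [map_add, LinearMap.add_apply, map_smul, LinearMap.smul_apply,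
          smul_eq_mul]
      rw [hexp, hDee, DLsymm (f j) (e i), hDef0 i j hij] at h0
      linear_combination h0
    have hDuf : ∀ i, DL u₀ (f i) = 0 := by
      intro i
      set j : Fin n := if i = 0 then 1 else 0 with hj
      have hij : j ≠ i := by
        rw [hj]; by_cases h : i = 0
        · rw [if_pos h, h]; exact fun hh => h01 hh.symm
        · rw [if_neg h]; exact fun hh => h hh.symm
      have hBxy : polarOf Q (e j + (-q) • f j + u₀) (f i) = 0 := by
        rw [pol_add_left, pol_add_left, pol_smul_left, hef, if_neg hij, hff,
          pol_comm Q u₀ (f i), hfu]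
        ring
      have h0 := L1' _ _ (hsvec j) (hQf i) hBxy
      have hexp : DL (e j + (-q) • f j + u₀) (f i)
          = DL (e j) (f i) + (-q) * DL (f j) (f i) + DL u₀ (f i) := by
        simp only [map_add, LinearMap.add_apply, map_smul, LinearMap.smul_apply,
          smul_eq_mul]
      rw [hexp, hDef0 j i hij, hDff] at h0
      linear_combination h0
    have hBuu : polarOf Q u₀ u₀ = 2 * q := by rw [pol_self, ← hq]
    have hDuu : DL u₀ u₀ = A * (2 * q) := by
      have h0 := DLself _ (hsvec 0)
      simp only [map_add, LinearMap.add_apply, map_smul, LinearMap.smul_apply,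
        smul_eq_mul] at h0
      rw [DLsymm (f 0) (e 0), DLsymm (e 0) u₀, DLsymm (f 0) u₀] at h0
      rw [hDee, hDff, hDefA 0, hDue 0, hDuf 0] at h0
      linear_combination h0
    -- D = A · B globally
    have hspan : Submodule.span K ({u₀} ∪ Set.range e ∪ Set.range f :
        Set (Fin (2 * n + 1) → K)) = ⊤ := by
      rw [eq_top_iff]
      intro w _
      obtain ⟨a, b, t, rfl⟩ := hdecomp w
      refine Submodule.add_mem _ (Submodule.add_mem _ ?_ ?_) ?_
      · refine Submodule.sum_mem _ fun i _ => Submodule.smul_mem _ _ ?_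
        exact Submodule.subset_span (Or.inl (Or.inr ⟨i, rfl⟩))
      · exact Submodule.sum_mem _ fun i _ => Submodule.smul_mem _ _
          (Submodule.subset_span (Or.inr ⟨i, rfl⟩))
      · exact Submodule.smul_mem _ _ (Submodule.subset_span (Or.inl (Or.inl rfl)))
    have hDB : DL = A • BL := by
      apply LinearMap.ext_on hspan
      intro x hx
      apply LinearMap.ext_on hspan
      intro y hy
      have hABval : (A • BL) x y = A * polarOf Q x y := by
        simp only [LinearMap.smul_apply, smul_eq_mul, hBL, ← polarOf_eq_bilin]
      rw [hABval]
      rcases hx with (hx | ⟨i, rfl⟩) | ⟨i, rfl⟩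
      · rcases hy with (hy | ⟨j, rfl⟩) | ⟨j, rfl⟩
        · rw [Set.mem_singleton_iff] at hx hy
          rw [hx, hy, hDuu, hBuu]
        · rw [Set.mem_singleton_iff] at hx
          rw [hx, hDue j, pol_comm Q u₀ (e j), heu j]; ring
        · rw [Set.mem_singleton_iff] at hx
          rw [hx, hDuf j, pol_comm Q u₀ (f j), hfu j]; ring
      · rcases hy with (hy | ⟨j, rfl⟩) | ⟨j, rfl⟩
        · rw [Set.mem_singleton_iff] at hy
          rw [hy, DLsymm (e i) u₀, hDue i, heu i]; ring
        · rw [hDee, hee]; ring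
        · by_cases h : i = j
          · subst h
            rw [hDefA i, hef, if_pos rfl]; ring
          · rw [hDef0 i j h, hef, if_neg h]; ring
      · rcases hy with (hy | ⟨j, rfl⟩) | ⟨j, rfl⟩
        · rw [Set.mem_singleton_iff] at hy
          rw [hy, DLsymm (f i) u₀, hDuf i, hfu i]; ring
        · rw [DLsymm (f i) (e j), pol_comm Q (f i) (e j)]
          by_cases h : j = i
          · subst h
            rw [hDefA j, hef, if_pos rfl]; ring
          · rw [hDef0 j i h, hef, if_neg h]; ring
        · rw [hDff, hff]; ring
    have hDeq : ∀ x y, polarOf Q x (g y) + polarOf Q (g x) y = A * polarOf Q x y := by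
      intro x y
      have h := LinearMap.congr_fun (LinearMap.congr_fun hDB x) y
      rw [hDLval] at h
      rw [h]
      simp only [LinearMap.smul_apply, smul_eq_mul, hBL, ← polarOf_eq_bilin]
    -- the quadratic relation for singular vectors
    have hT : ∀ x, Q x = 0 → g (g x) = A • g x - lam • x := by
      intro x hx
      have hQgx : Q (g x) = 0 := hQg0 x hx
      have hQggx : Q (g (g x)) = 0 := hQg0 _ hQgx
      have hBxgx : polarOf Q x (g x) = 0 := hpd x hx
      have hBgxggx : polarOf Q (g x) (g (g x)) = 0 := by
        rw [Bpres, hBxgx, mul_zero]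
      have hBxggx : polarOf Q x (g (g x)) = 0 := by
        have h1 := L1 x (g x) hx hQgx hBxgx
        have h2 : polarOf Q (g x) (g x) = 0 := by rw [pol_self, hQgx, mul_zero]
        rw [h2, add_zero] at h1
        exact h1
      have hperp : ∀ w, polarOf Q (g (g x) + (-A) • g x + lam • x) w = 0 := by
        intro w
        rw [pol_add_left, pol_add_left, pol_smul_left, pol_smul_left]
        have hD := hDeq (g x) w
        have hBp : polarOf Q (g x) (g w) = lam * polarOf Q x w := Bpres x w
        linear_combination hD - hBp
      have hQr : Q (g (g x) + (-A) • g x + lam • x) = 0 := by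
        have c1 : polarOf Q (g (g x)) (g x) = 0 := by rw [pol_comm]; exact hBgxggx
        have c2 : polarOf Q (g (g x)) x = 0 := by rw [pol_comm]; exact hBxggx
        have c3 : polarOf Q (g x) x = 0 := by rw [pol_comm]; exact hBxgx
        simp only [Q_add, Q_smul, pol_add_left, pol_smul_left, pol_smul_right]
        rw [hQggx, hQgx, hx, c1, c2, c3]
        ring
      have hr0 := hnd _ hperp hQr
      exact hreform _ _ _ A hr0
    by_cases hroot : ∃ c : K, c * c - A * c + lam = 0
    · -- reducible case: produce a singular eigenvector
      obtain ⟨c, hc⟩ := hroot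
      have hrel := hT (e 0) (hQe 0)
      by_cases hfix : g (e 0) - (A - c) • (e 0) = 0
      · refine ⟨e 0, he0ne, hQe 0, A - c, ?_⟩
        exact sub_eq_zero.mp hfix
      · refine ⟨g (e 0) - (A - c) • (e 0), hfix, ?_, c, ?_⟩
        · have c3 : polarOf Q (g (e 0)) (e 0) = 0 := by
            rw [pol_comm]; exact hpd _ (hQe 0)
          rw [sub_eq_add_neg, ← neg_one_smul K ((A - c) • e 0), smul_smul, Q_add,
            Q_smul, hQe, hQg0 _ (hQe 0), pol_smul_right, c3]
          ring
        · have hgsub : g (g (e 0) - (A - c) • e 0)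
              = g (g (e 0)) - (A - c) • g (e 0) := by
            rw [sub_eq_add_neg, ← neg_smul, hadd, hsmul, hσ, neg_smul, ← sub_eq_add_neg]
          rw [hgsub, hrel]
          have hlam' : lam = c * (A - c) := by linear_combination hc
          rw [hlam']
          module
    · -- irreducible case: contradiction with odd dimension
      push_neg at hroot
      exfalso
      set T : (Fin (2 * n + 1) → K) →ₗ[K] (Fin (2 * n + 1) → K) :=
        gL ∘ₗ gL - A • gL + lam • LinearMap.id with hTdef
      have hTval : ∀ x, T x = g (g x) - A • g x + lam • x := by
        intro x
        simp only [hTdef, LinearMap.add_apply, LinearMap.sub_apply, LinearMap.smul_apply,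
          LinearMap.comp_apply, LinearMap.id_apply, hgLapp]
      have hTzero : ∀ x, Q x = 0 → T x = 0 := by
        intro x hx
        rw [hTval, hT x hx]
        module
      have hTu : T u₀ = 0 := by
        have hs := hTzero _ (hsvec 0)
        have hu : u₀ = (e 0 + (-q) • f 0 + u₀) - e 0 + q • f 0 := by module
        rw [hu, map_add, map_sub, hs, hTzero _ (hQe 0), map_smul, hTzero _ (hQf 0)]
        simp
      have hTall : ∀ x, T x = 0 := by
        intro x
        obtain ⟨a, b, t, rfl⟩ := hdecomp x
        have z1 : ∀ i ∈ Finset.univ, T (a i • e i) = (0 : Fin (2 * n + 1) → K) :=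
          fun i _ => by rw [map_smul, hTzero _ (hQe i), smul_zero]
        have z2 : ∀ i ∈ Finset.univ, T (b i • f i) = (0 : Fin (2 * n + 1) → K) :=
          fun i _ => by rw [map_smul, hTzero _ (hQf i), smul_zero]
        rw [map_add, map_add, map_sum, map_sum, Finset.sum_congr rfl z1,
          Finset.sum_congr rfl z2, map_smul, hTu]
        simp
      have hgrel : ∀ x, gL (gL x) = A • gL x - lam • x := by
        intro x
        have h := hTall x
        rw [hTval, sub_add] at h
        show g (g x) = A • g x - lam • x
        exact sub_eq_zero.mp h
      have heven := even_finrank_of_quadratic_rel A lam hroot (2 * n + 1)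
        (Fin (2 * n + 1) → K) gL hgrel hVr
      obtain ⟨r, hr⟩ := heven
      omega
  · -- σ ≠ id
    push_neg at hσ
    obtain ⟨a₀, ha₀⟩ := hσ
    have L2 : ∀ x y, Q x = 0 → Q y = 0 → polarOf Q x y = 0 → polarOf Q y (g x) = 0 := by
      intro x y hx hy hxy
      have key : ∀ a : K, a * polarOf Q x (g y) + σ a * polarOf Q y (g x) = 0 := by
        intro a
        have hz : Q (a • x + y) = 0 := by
          rw [Q_add, Q_smul, hx, hy, pol_smul_left, hxy]; ring
        have h := hpd _ hz
        rw [hadd, hsmul] at h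
        simp only [pol_add_left, pol_add_right, pol_smul_left, pol_smul_right] at h
        rw [hpd x hx, hpd y hy] at h
        linear_combination h
      have h1 := key 1
      rw [map_one, one_mul, one_mul] at h1
      have h2 := key a₀
      have h3 : (σ a₀ - a₀) * polarOf Q y (g x) = 0 := by
        linear_combination h2 - a₀ * h1
      have h4 : σ a₀ - a₀ ≠ 0 := sub_ne_zero.mpr ha₀
      exact (mul_eq_zero.mp h3).resolve_left h4
    have hQv : Q (g (e 0)) = 0 := hQg0 _ (hQe 0)
    have hBve : ∀ i, polarOf Q (e i) (g (e 0)) = 0 := fun i =>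
      L2 (e 0) (e i) (hQe 0) (hQe i) (hee 0 i)
    have hBvf : ∀ i, i ≠ 0 → polarOf Q (f i) (g (e 0)) = 0 := fun i hi =>
      L2 (e 0) (f i) (hQe 0) (hQf i)
        (by rw [hef, if_neg (fun h : (0 : Fin n) = i => hi h.symm)])
    have hBvs : polarOf Q (e 1 + (-q) • f 1 + u₀) (g (e 0)) = 0 := by
      apply L2 (e 0) _ (hQe 0) (hsvec 1)
      rw [pol_add_right, pol_add_right, pol_smul_right, hee, hef, if_neg h01, heu]
      ring
    have hBvu : polarOf Q u₀ (g (e 0)) = 0 := by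
      have h := hBvs
      rw [pol_add_left, pol_add_left, pol_smul_left, hBve 1,
        hBvf 1 (fun h => h01 h.symm)] at h
      linear_combination h
    set cc := polarOf Q (g (e 0)) (f 0) with hcc
    set v' := g (e 0) - cc • e 0 with hv'def
    have hv'e : ∀ i, polarOf Q v' (e i) = 0 := by
      intro i
      rw [hv'def, pol_sub_left, pol_smul_left, pol_comm Q (g (e 0)) (e i), hBve i,
        hee]
      ring
    have hv'f : ∀ j, polarOf Q v' (f j) = 0 := by
      intro j
      by_cases hj : j = 0
      · subst hj
        rw [hv'def, pol_sub_left, pol_smul_left, hef, if_pos rfl, ← hcc]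
        ring
      · rw [hv'def, pol_sub_left, pol_smul_left, pol_comm Q (g (e 0)) (f j),
          hBvf j hj, hef, if_neg (fun h : (0 : Fin n) = j => hj h.symm)]
        ring
    have hv'u : polarOf Q v' u₀ = 0 := by
      rw [hv'def, pol_sub_left, pol_smul_left, pol_comm Q (g (e 0)) u₀, hBvu, heu]
      ring
    have hv'perp : ∀ w, polarOf Q v' w = 0 := by
      intro w
      obtain ⟨a, b, t, rfl⟩ := hdecomp w
      rw [pol_add_right, pol_add_right, pol_sum_right, pol_sum_right, pol_smul_right,
        hv'u]
      simp only [pol_smul_right]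
      have hz1 : ∀ j, a j * polarOf Q v' (e j) = 0 := fun j => by rw [hv'e, mul_zero]
      have hz2 : ∀ j, b j * polarOf Q v' (f j) = 0 := fun j => by rw [hv'f, mul_zero]
      rw [Finset.sum_congr rfl fun j _ => hz1 j, Finset.sum_congr rfl fun j _ => hz2 j]
      simp
    have hQv' : Q v' = 0 := by
      have c3 : polarOf Q (g (e 0)) (e 0) = 0 := by
        rw [pol_comm]; exact hpd _ (hQe 0)
      rw [hv'def, sub_eq_add_neg, ← neg_smul, Q_add, Q_smul, hQe, hQv,
        pol_smul_right, c3]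
      ring
    have hv'0 : v' = 0 := hnd v' hv'perp hQv'
    refine ⟨e 0, he0ne, hQe 0, cc, ?_⟩
    rw [hv'def, sub_eq_zero] at hv'0
    exact hv'0
end
end

section
/- Let K be a field, n ≥ 3 odd, and let θ be a point-domestic collineation of the symplectic polar space C_{n,1}(K), induced by a semilinear similitude g (so ω(x,gx) = 0 for all x ∈ K^{2n}). Then θ fixes a chamber: there exist totally isotropic subspaces V_1 ⊂ V_2 ⊂ … ⊂ V_n of K^{2n} with dim V_j = j and gV_j = V_j for all j = 1,…,n. -/
open Module Submodule

noncomputable section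

/-- `K^{2n}`, written as pairs of `n`-tuples. -/
abbrev Vs (K : Type) (n : ℕ) : Type := (Fin n → K) × (Fin n → K)

/-- The standard symplectic form on `K^{2n}`. -/
def sform {K : Type} [Field K] {n : ℕ} (x y : Vs K n) : K :=
  ∑ j, (x.1 j * y.2 j - x.2 j * y.1 j)

section SformAux

variable {K : Type} [Field K] {n : ℕ}

lemma sform_add_left (x y z : Vs K n) : sform (x + y) z = sform x z + sform y z := by
  simp only [sform, Prod.fst_add, Prod.snd_add, Pi.add_apply, ← Finset.sum_add_distrib]
  exact Finset.sum_congr rfl fun j _ => by ring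

lemma sform_add_right (x y z : Vs K n) : sform x (y + z) = sform x y + sform x z := by
  simp only [sform, Prod.fst_add, Prod.snd_add, Pi.add_apply, ← Finset.sum_add_distrib]
  exact Finset.sum_congr rfl fun j _ => by ring

lemma sform_smul_left (a : K) (x y : Vs K n) : sform (a • x) y = a * sform x y := by
  simp only [sform, Prod.smul_fst, Prod.smul_snd, Pi.smul_apply, smul_eq_mul, Finset.mul_sum]
  exact Finset.sum_congr rfl fun j _ => by ring

lemma sform_smul_right (a : K) (x y : Vs K n) : sform x (a • y) = a * sform x y := by
  simp only [sform, Prod.smul_fst, Prod.smul_snd, Pi.smul_apply, smul_eq_mul, Finset.mul_sum]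
  exact Finset.sum_congr rfl fun j _ => by ring

lemma sform_self (x : Vs K n) : sform x x = 0 :=
  Finset.sum_eq_zero fun j _ => by ring

lemma sform_zero_left (y : Vs K n) : sform 0 y = 0 :=
  Finset.sum_eq_zero fun j _ => by simp

lemma sform_swap (x y : Vs K n) : sform x y = - sform y x := by
  rw [sform, sform, ← Finset.sum_neg_distrib]
  exact Finset.sum_congr rfl fun j _ => by ring

lemma sform_sub_left (x y z : Vs K n) : sform (x - y) z = sform x z - sform y z := by
  simp only [sform, Prod.fst_sub, Prod.snd_sub, Pi.sub_apply, ← Finset.sum_sub_distrib]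
  exact Finset.sum_congr rfl fun j _ => by ring

lemma sform_nondeg {x : Vs K n} (h : ∀ y, sform x y = 0) : x = 0 := by
  have h1 : ∀ j, x.1 j = 0 := by
    intro j
    have := h (0, Pi.single j 1)
    simpa [sform, Pi.single_apply, mul_ite, Finset.sum_ite_eq'] using this
  have h2 : ∀ j, x.2 j = 0 := by
    intro j
    have := h (Pi.single j 1, 0)
    simpa [sform, Pi.single_apply, mul_ite, Finset.sum_ite_eq'] using this
  ext j
  · exact h1 j
  · exact h2 j

/-- The standard symplectic form, as a bundled bilinear form. -/
def sformB (K : Type) [Field K] (n : ℕ) : LinearMap.BilinForm K (Vs K n) :=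
  LinearMap.mk₂ K sform sform_add_left sform_smul_left sform_add_right sform_smul_right

@[simp] lemma sformB_apply (x y : Vs K n) : sformB K n x y = sform x y := rfl

lemma sformB_refl : (sformB K n).IsRefl := by
  intro x y h
  simp only [sformB_apply] at *
  rw [sform_swap, h, neg_zero]

lemma sformB_nondeg : (sformB K n).Nondegenerate := by
  refine ⟨fun x h => sform_nondeg h, fun y h => sform_nondeg fun x => ?_⟩
  rw [sform_swap]
  have := h x
  simp only [sformB_apply] at this
  rw [this, neg_zero]

end SformAux

section DetAux

/-- A fixed-point-free involution forces even cardinality. -/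
lemma even_of_fpf_involution {m : ℕ} (σ : Equiv.Perm (Fin m))
    (hinv : ∀ i, σ (σ i) = i) (hfpf : ∀ i, σ i ≠ i) : Even m := by
  have h : ∑ _i : Fin m, (1 : ZMod 2) = 0 :=
    Finset.sum_ninvolution σ (fun a => by decide)
      (fun a _ => hfpf a) (fun a => Finset.mem_univ _) hinv
  simp only [Finset.sum_const, Finset.card_univ, Fintype.card_fin, nsmul_eq_mul, mul_one] at h
  rw [ZMod.natCast_eq_zero_iff] at h
  exact even_iff_two_dvd.2 h

/-- The determinant of an alternating matrix of odd size vanishes. -/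
lemma det_alt_odd {F : Type} [Field F] {m : ℕ} (hm : Odd m)
    (A : Matrix (Fin m) (Fin m) F) (hd : ∀ i, A i i = 0)
    (hsk : ∀ i j, A j i = - A i j) : A.det = 0 := by
  rw [Matrix.det_apply']
  apply Finset.sum_ninvolution (fun σ : Equiv.Perm (Fin m) => σ⁻¹)
  · intro σ
    have h1 : ∏ i, A (σ⁻¹ i) i = ∏ i, A i (σ i) := by
      rw [← Equiv.prod_comp σ (fun i => A (σ⁻¹ i) i)]
      simp
    have h2 : ∏ i, A i (σ i) = (-1) ^ m * ∏ i, A (σ i) i := by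
      calc ∏ i, A i (σ i) = ∏ i, (-1) * A (σ i) i := by
            refine Finset.prod_congr rfl fun i _ => ?_
            rw [hsk (σ i) i]; ring
        _ = (-1) ^ m * ∏ i, A (σ i) i := by
            rw [Finset.prod_mul_distrib, Finset.prod_const, Finset.card_univ, Fintype.card_fin]
    have hsgn : (Equiv.Perm.sign σ⁻¹ : ℤ) = (Equiv.Perm.sign σ : ℤ) := by
      rw [Equiv.Perm.sign_inv]
    rw [h1, h2, hm.neg_one_pow, hsgn]
    ring
  · intro σ hσ
    intro heq
    have hfpf : ∀ i, σ i ≠ i := by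
      intro i hi
      apply hσ
      have : ∏ i, A (σ i) i = 0 :=
        Finset.prod_eq_zero (Finset.mem_univ i) (by rw [hi, hd])
      rw [this, mul_zero]
    have hinv : ∀ i, σ (σ i) = i := by
      intro i
      nth_rewrite 1 [← heq]
      exact σ.symm_apply_apply i
    have heven := even_of_fpf_involution σ hinv hfpf
    exact Nat.not_even_iff_odd.mpr hm heven
  · intro σ; exact Finset.mem_univ _
  · intro σ; exact inv_inv σ

end DetAux

/-- `g` is a `σ`-semilinear bijection of `K^{2n}` which is a similitude of the standard
symplectic form; such a `g` induces a collineation of `C_{n,1}(K)`. -/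
structure IsSymplecticCollineation {K : Type} [Field K] {n : ℕ} (σ : K ≃+* K) (lam : K)
    (g : Vs K n → Vs K n) : Prop where
  bij : Function.Bijective g
  map_add : ∀ x y, g (x + y) = g x + g y
  map_smulc : ∀ (a : K) (x : Vs K n), g (a • x) = σ a • g x
  lam_ne : lam ≠ 0
  sim : ∀ x y, sform (g x) (g y) = lam * σ (sform x y)

set_option maxHeartbeats 1000000 in
set_option synthInstance.maxHeartbeats 100000 in
theorem symplectic_pointDomestic_odd_rank_fixes_chamber
    {K : Type} [Field K] {n : ℕ} (hn : 3 ≤ n) (hodd : Odd n)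
    (σ : K ≃+* K) (lam : K) (g : Vs K n → Vs K n)
    (hg : IsSymplecticCollineation σ lam g)
    -- θ is point-domestic:
    (hpd : ∀ x : Vs K n, sform x (g x) = 0) :
    ∃ W : Fin n → Submodule K (Vs K n),
      (∀ j : Fin n, finrank K (W j) = (j : ℕ) + 1) ∧
      (∀ j k : Fin n, j ≤ k → W j ≤ W k) ∧
      (∀ j : Fin n, ∀ x ∈ W j, ∀ y ∈ W j, sform x y = 0) ∧
      (∀ j : Fin n, g '' (W j : Set (Vs K n)) = (W j : Set (Vs K n))) := by
  classical
  obtain ⟨hbij, hadd, hsmulc, hlam, hsim⟩ := hg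
  -- polarization of point-domesticity
  have hpolar : ∀ x y : Vs K n, sform x (g y) = - sform y (g x) := by
    intro x y
    have h0 := hpd (x + y)
    rw [hadd, sform_add_left, sform_add_right, sform_add_right, hpd, hpd] at h0
    linear_combination h0
  -- the automorphism σ is the identity
  have he0 : (0 : ℕ) < n := by omega
  have huv : sform ((Pi.single ⟨0, he0⟩ 1, 0) : Vs K n) ((0, Pi.single ⟨0, he0⟩ 1) : Vs K n)
      = 1 := by
    simp [sform, Pi.single_apply, Finset.sum_ite_eq']
  obtain ⟨w, hw⟩ := hbij.2 ((0, Pi.single ⟨0, he0⟩ 1) : Vs K n)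
  have hσ : ∀ a : K, σ a = a := by
    intro a
    have key : ∀ x y : Vs K n, (σ a - a) * sform x (g y) = 0 := by
      intro x y
      have h1 : sform x (g (a • y)) = σ a * sform x (g y) := by
        rw [hsmulc, sform_smul_right]
      have h2 : sform x (g (a • y)) = a * sform x (g y) := by
        rw [hpolar x (a • y), sform_smul_left, hpolar y x]
        ring
      linear_combination h2 - h1
    have hk := key ((Pi.single ⟨0, he0⟩ 1, 0) : Vs K n) w
    rw [hw, huv, mul_one] at hk
    linear_combination hk
  -- bundle `g` as a linear map
  let G : Vs K n →ₗ[K] Vs K n :=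
    { toFun := g
      map_add' := hadd
      map_smul' := fun a x => by simp only [hsmulc, hσ, RingHom.id_apply] }
  have hsub : ∀ x y : Vs K n, g (x - y) = g x - g y := fun x y => G.map_sub x y
  have hg0 : g 0 = 0 := G.map_zero
  have hsim' : ∀ x y, sform (g x) (g y) = lam * sform x y := fun x y => by rw [hsim, hσ]
  have hsa : ∀ x y, sform (g x) y = sform x (g y) := by
    intro x y
    calc sform (g x) y = - sform y (g x) := sform_swap _ _
      _ = - - sform x (g y) := by rw [hpolar y x]
      _ = sform x (g y) := neg_neg _
  have hGG : ∀ x, g (g x) = lam • x := by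
    intro x
    have hz : ∀ y, sform (g (g x) - lam • x) y = 0 := by
      intro y
      rw [sform_sub_left, hsa (g x) y, hsim', sform_smul_left, sub_self]
    have h := sform_nondeg hz
    rwa [sub_eq_zero] at h
  -- λ is a square (this is where odd rank is used)
  obtain ⟨mu, hmu⟩ : ∃ mu : K, mu ^ 2 = lam := by
    by_contra hc
    push_neg at hc
    -- pass to the quadratic extension L = K[X]/(X² - λ)
    have hirr : Irreducible (Polynomial.X ^ 2 - Polynomial.C lam : Polynomial K) :=
      X_pow_sub_C_irreducible_of_prime Nat.prime_two hc
    haveI : Fact (Irreducible (Polynomial.X ^ 2 - Polynomial.C lam : Polynomial K)) := ⟨hirr⟩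
    set f : Polynomial K := Polynomial.X ^ 2 - Polynomial.C lam with hf
    have hfG : Polynomial.aeval (G : Module.End K (Vs K n)) f = 0 := by
      rw [hf, map_sub, map_pow, Polynomial.aeval_X, Polynomial.aeval_C]
      rw [sub_eq_zero, pow_two]
      refine LinearMap.ext fun x => ?_
      rw [Module.End.mul_apply, Module.algebraMap_end_apply]
      exact hGG x
    -- the action of L on V via G
    let φ : AdjoinRoot f →+* Module.End K (Vs K n) :=
      Ideal.Quotient.lift (Ideal.span {f})
        (Polynomial.aeval (G : Module.End K (Vs K n))).toRingHom
        (by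
          intro p hp
          rw [Ideal.mem_span_singleton] at hp
          obtain ⟨q, rfl⟩ := hp
          simp only [AlgHom.toRingHom_eq_coe, RingHom.coe_coe, map_mul, hfG, zero_mul])
    have hφmk : ∀ p : Polynomial K,
        φ (AdjoinRoot.mk f p) = Polynomial.aeval (G : Module.End K (Vs K n)) p :=
      fun p => Ideal.Quotient.lift_mk _ _ _
    letI : SMul (AdjoinRoot f) (Vs K n) := ⟨fun z x => φ z x⟩
    have hsmul_def : ∀ (z : AdjoinRoot f) (x : Vs K n), z • x = φ z x := fun _ _ => rfl
    letI : MulAction (AdjoinRoot f) (Vs K n) :=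
      { one_smul := fun x => by rw [hsmul_def, φ.map_one]; rfl
        mul_smul := fun z w' x => by
          rw [hsmul_def, hsmul_def, hsmul_def, φ.map_mul]; rfl }
    letI : DistribMulAction (AdjoinRoot f) (Vs K n) :=
      { smul_zero := fun z => by rw [hsmul_def]; exact (φ z).map_zero
        smul_add := fun z x y => by
          rw [hsmul_def, hsmul_def, hsmul_def]; exact (φ z).map_add x y }
    letI : Module (AdjoinRoot f) (Vs K n) :=
      { add_smul := fun z w' x => by
          rw [hsmul_def, hsmul_def, hsmul_def, φ.map_add]; rfl
        zero_smul := fun x => by rw [hsmul_def, φ.map_zero]; rfl }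
    have hφalg : ∀ a : K, φ (algebraMap K (AdjoinRoot f) a)
        = algebraMap K (Module.End K (Vs K n)) a := by
      intro a
      rw [AdjoinRoot.algebraMap_eq]
      show φ (AdjoinRoot.mk f (Polynomial.C a)) = _
      rw [hφmk, Polynomial.aeval_C]
    letI : IsScalarTower K (AdjoinRoot f) (Vs K n) := ⟨fun a z x => by
      rw [Algebra.smul_def, hsmul_def, φ.map_mul, hφalg, hsmul_def]
      rw [Module.End.mul_apply, Module.algebraMap_end_apply]⟩
    letI : Module.Finite (AdjoinRoot f) (Vs K n) :=
      Module.Finite.of_restrictScalars_finite K (AdjoinRoot f) (Vs K n)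
    -- dimension count
    have hdimV : finrank K (Vs K n) = 2 * n := by
      rw [Module.finrank_prod, Module.finrank_pi, Fintype.card_fin]
      omega
    have hfinKL : finrank K (AdjoinRoot f) = 2 := by
      rw [(AdjoinRoot.powerBasis (f := f) hirr.ne_zero).finrank]
      show f.natDegree = 2
      rw [hf, Polynomial.natDegree_X_pow_sub_C]
    have hfinLV : finrank (AdjoinRoot f) (Vs K n) = n := by
      have htower := Module.finrank_mul_finrank K (AdjoinRoot f) (Vs K n)
      rw [hfinKL, hdimV] at htower
      omega
    -- key identities for the root
    have hrt2 : (AdjoinRoot.root f) * (AdjoinRoot.root f)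
        = algebraMap K (AdjoinRoot f) lam := by
      have h0 : (Polynomial.X ^ 2 - Polynomial.C lam : Polynomial K).eval₂
          (AdjoinRoot.of f) (AdjoinRoot.root f) = 0 := by
        rw [← hf]; exact AdjoinRoot.eval₂_root f
      rw [Polynomial.eval₂_sub, Polynomial.eval₂_pow, Polynomial.eval₂_X, Polynomial.eval₂_C,
        sub_eq_zero, pow_two] at h0
      rw [h0, AdjoinRoot.algebraMap_eq]
    have hrt_smul : ∀ x : Vs K n, (AdjoinRoot.root f) • x = g x := by
      intro x
      rw [hsmul_def]
      show φ (AdjoinRoot.mk f Polynomial.X) x = g x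
      rw [hφmk, Polynomial.aeval_X]
      rfl
    -- the alternating L-bilinear form Φ
    set Φ : Vs K n → Vs K n → AdjoinRoot f := fun x y =>
      algebraMap K (AdjoinRoot f) (sform x (g y))
        + algebraMap K (AdjoinRoot f) (sform x y) * AdjoinRoot.root f with hΦdef
    have hΦaddr : ∀ x y z, Φ x (y + z) = Φ x y + Φ x z := by
      intro x y z
      simp only [hΦdef, hadd, sform_add_right, map_add]
      ring
    have hΦaddl : ∀ x y z, Φ (x + y) z = Φ x z + Φ y z := by
      intro x y z
      simp only [hΦdef, sform_add_left, map_add]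
      ring
    have hΦgr : ∀ x y, Φ x (g y) = AdjoinRoot.root f * Φ x y := by
      intro x y
      simp only [hΦdef]
      rw [hGG, sform_smul_right, map_mul, ← hrt2]
      ring
    have hΦgl : ∀ x y, Φ (g x) y = AdjoinRoot.root f * Φ x y := by
      intro x y
      simp only [hΦdef]
      rw [hsim', hsa, map_mul, ← hrt2]
      ring
    have hΦsmulKr : ∀ (a : K) x y, Φ x (a • y) = algebraMap K (AdjoinRoot f) a * Φ x y := by
      intro a x y
      simp only [hΦdef]
      rw [hsmulc, hσ, sform_smul_right, sform_smul_right, map_mul, map_mul]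
      ring
    have hΦsmulKl : ∀ (a : K) x y, Φ (a • x) y = algebraMap K (AdjoinRoot f) a * Φ x y := by
      intro a x y
      simp only [hΦdef]
      rw [sform_smul_left, sform_smul_left, map_mul, map_mul]
      ring
    have hΦ0r : ∀ x, Φ x 0 = 0 := by
      intro x
      have h := hΦaddr x 0 0
      rwa [add_zero, right_eq_add] at h
    have hΦ0l : ∀ y, Φ 0 y = 0 := by
      intro y
      have h := hΦaddl 0 0 y
      rwa [add_zero, right_eq_add] at h
    -- L-linearity of Φ
    have hΦsmulr : ∀ (z : AdjoinRoot f) (x y : Vs K n), Φ x (z • y) = z * Φ x y := by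
      intro z
      obtain ⟨p, rfl⟩ := AdjoinRoot.mk_surjective z
      induction p using Polynomial.induction_on with
      | C a =>
        intro x y
        have h1 : (AdjoinRoot.mk f (Polynomial.C a)) = algebraMap K (AdjoinRoot f) a := by
          rw [AdjoinRoot.mk_C, ← AdjoinRoot.algebraMap_eq]
        rw [h1, algebraMap_smul, hΦsmulKr]
      | add p q hp hq =>
        intro x y
        rw [map_add, add_smul, hΦaddr, hp, hq, add_mul]
      | monomial k a hk =>
        intro x y
        have hrw : (Polynomial.C a * Polynomial.X ^ (k + 1) : Polynomial K)
            = (Polynomial.C a * Polynomial.X ^ k) * Polynomial.X := by ring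
        rw [hrw, map_mul, AdjoinRoot.mk_X, mul_smul, hrt_smul, hk x (g y), hΦgr]
        ring
    have hΦsmull : ∀ (z : AdjoinRoot f) (x y : Vs K n), Φ (z • x) y = z * Φ x y := by
      intro z
      obtain ⟨p, rfl⟩ := AdjoinRoot.mk_surjective z
      induction p using Polynomial.induction_on with
      | C a =>
        intro x y
        have h1 : (AdjoinRoot.mk f (Polynomial.C a)) = algebraMap K (AdjoinRoot f) a := by
          rw [AdjoinRoot.mk_C, ← AdjoinRoot.algebraMap_eq]
        rw [h1, algebraMap_smul, hΦsmulKl]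
      | add p q hp hq =>
        intro x y
        rw [map_add, add_smul, hΦaddl, hp, hq, add_mul]
      | monomial k a hk =>
        intro x y
        have hrw : (Polynomial.C a * Polynomial.X ^ (k + 1) : Polynomial K)
            = (Polynomial.C a * Polynomial.X ^ k) * Polynomial.X := by ring
        rw [hrw, map_mul, AdjoinRoot.mk_X, mul_smul, hrt_smul, hk (g x) y, hΦgl]
        ring
    -- expansion over finite sums
    have hΦsumr : ∀ (x : Vs K n) (s : Finset (Fin (finrank (AdjoinRoot f) (Vs K n))))
        (c : Fin (finrank (AdjoinRoot f) (Vs K n)) → AdjoinRoot f)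
        (w' : Fin (finrank (AdjoinRoot f) (Vs K n)) → Vs K n),
        Φ x (∑ j ∈ s, c j • w' j) = ∑ j ∈ s, c j * Φ x (w' j) := by
      intro x s c w'
      induction s using Finset.induction_on with
      | empty => simpa using hΦ0r x
      | insert _ _ hj ih =>
        rw [Finset.sum_insert hj, Finset.sum_insert hj, hΦaddr, hΦsmulr, ih]
    have hΦsuml : ∀ (y : Vs K n) (s : Finset (Fin (finrank (AdjoinRoot f) (Vs K n))))
        (c : Fin (finrank (AdjoinRoot f) (Vs K n)) → AdjoinRoot f)
        (w' : Fin (finrank (AdjoinRoot f) (Vs K n)) → Vs K n),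
        Φ (∑ j ∈ s, c j • w' j) y = ∑ j ∈ s, c j * Φ (w' j) y := by
      intro y s c w'
      induction s using Finset.induction_on with
      | empty => simpa using hΦ0l y
      | insert _ _ hj ih =>
        rw [Finset.sum_insert hj, Finset.sum_insert hj, hΦaddl, hΦsmull, ih]
    -- the Gram matrix of Φ in an L-basis is alternating of odd size: contradiction
    let b := Module.finBasis (AdjoinRoot f) (Vs K n)
    let A : Matrix (Fin (finrank (AdjoinRoot f) (Vs K n)))
        (Fin (finrank (AdjoinRoot f) (Vs K n))) (AdjoinRoot f) := fun i j => Φ (b i) (b j)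
    have hAdiag : ∀ i, A i i = 0 := by
      intro i
      show Φ (b i) (b i) = 0
      rw [hΦdef]
      simp only [hpd, sform_self, map_zero, zero_mul, add_zero]
    have hAskew : ∀ i j, A j i = - A i j := by
      intro i j
      show Φ (b j) (b i) = - Φ (b i) (b j)
      rw [hΦdef]
      simp only []
      rw [hpolar (b j) (b i), sform_swap (b j) (b i), map_neg, map_neg]
      ring
    have hOddm : Odd (finrank (AdjoinRoot f) (Vs K n)) := by rw [hfinLV]; exact hodd
    have hdet : A.det = 0 := det_alt_odd hOddm A hAdiag hAskew
    obtain ⟨v, hv0, hvA⟩ := (Matrix.exists_mulVec_eq_zero_iff).mpr hdet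
    set y0 : Vs K n := ∑ j, v j • b j with hy0def
    have hy0ne : y0 ≠ 0 := by
      intro h
      apply hv0
      have hli := b.linearIndependent
      rw [Fintype.linearIndependent_iff] at hli
      exact funext (hli v (by rw [← hy0def]; exact h))
    have hΦby : ∀ i, Φ (b i) y0 = 0 := by
      intro i
      have hsum : Φ (b i) y0 = ∑ j, v j * A i j := by
        rw [hy0def, hΦsumr]
      rw [hsum]
      have hmv := congrFun hvA i
      simp only [Matrix.mulVec, dotProduct, Pi.zero_apply] at hmv
      rw [Finset.sum_congr rfl (fun j _ => mul_comm (v j) (A i j))]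
      exact hmv
    have hΦxy : ∀ x, Φ x y0 = 0 := by
      intro x
      have hx := b.sum_repr x
      calc Φ x y0 = Φ (∑ i, b.repr x i • b i) y0 := by rw [hx]
        _ = ∑ i, b.repr x i * Φ (b i) y0 := hΦsuml y0 _ _ _
        _ = 0 := by simp [hΦby]
    -- extract the K-components: y0 is sform-orthogonal to everything
    have hsf : ∀ x, sform y0 x = 0 := by
      intro x
      have hx0 : sform x y0 = 0 := by
        by_contra hne
        have h := hΦxy x
        rw [hΦdef] at h
        simp only [] at h
        set a : K := sform x (g y0) with ha
        set c : K := sform x y0 with hcdef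
        have h2 : algebraMap K (AdjoinRoot f) c * AdjoinRoot.root f
            = - algebraMap K (AdjoinRoot f) a := by linear_combination h
        have hsq : algebraMap K (AdjoinRoot f) (lam * c * c)
            = algebraMap K (AdjoinRoot f) (a * a) := by
          calc algebraMap K (AdjoinRoot f) (lam * c * c)
              = (algebraMap K (AdjoinRoot f) c * AdjoinRoot.root f)
                * (algebraMap K (AdjoinRoot f) c * AdjoinRoot.root f) := by
                rw [map_mul, map_mul, ← hrt2]; ring
            _ = algebraMap K (AdjoinRoot f) (a * a) := by rw [h2, map_mul]; ring
        have hKeq : lam * c * c = a * a := RingHom.injective (algebraMap K (AdjoinRoot f)) hsq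
        apply hc (a / c)
        have hcc : c * c ≠ 0 := mul_ne_zero hne hne
        rw [div_pow, pow_two, pow_two, div_eq_iff hcc]
        linear_combination -hKeq
      rw [sform_swap, hx0, neg_zero]
    exact hy0ne (sform_nondeg hsf)
  -- dimension of the ambient space
  have hdimV : finrank K (Vs K n) = 2 * n := by
    rw [Module.finrank_prod, Module.finrank_pi, Fintype.card_fin]
    omega
  -- extension step: any invariant totally isotropic subspace of dimension < n
  -- can be extended by one dimension
  have hstep : ∀ M : Submodule K (Vs K n),
      (∀ x ∈ M, ∀ y ∈ M, sform x y = 0) → (∀ x ∈ M, g x ∈ M) → finrank K M < n →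
      ∃ M' : Submodule K (Vs K n), M ≤ M' ∧
        (∀ x ∈ M', ∀ y ∈ M', sform x y = 0) ∧ (∀ x ∈ M', g x ∈ M') ∧
        finrank K M' = finrank K M + 1 := by
    intro M hiso hinv hdim
    have hMO : M ≤ (sformB K n).orthogonal M := by
      intro x hx m hm
      exact hiso m hm x hx
    have hOrank : finrank K ((sformB K n).orthogonal M) = 2 * n - finrank K M := by
      rw [LinearMap.BilinForm.finrank_orthogonal sformB_nondeg, hdimV]
    have hlt : M < (sformB K n).orthogonal M := by
      refine lt_of_le_of_ne hMO (fun h => ?_)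
      rw [← h] at hOrank
      omega
    obtain ⟨x, hxO, hxM⟩ := SetLike.exists_of_lt hlt
    -- adjoining a suitable vector
    have hadj : ∀ w : Vs K n, w ∈ (sformB K n).orthogonal M → w ∉ M →
        g w ∈ (M ⊔ (K ∙ w)) →
        ∃ M' : Submodule K (Vs K n), M ≤ M' ∧
          (∀ x ∈ M', ∀ y ∈ M', sform x y = 0) ∧ (∀ x ∈ M', g x ∈ M') ∧
          finrank K M' = finrank K M + 1 := by
      intro w hwO hwM hgw
      have hw_m : ∀ m ∈ M, sform m w = 0 := fun m hm => hwO m hm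
      have hm_w : ∀ m ∈ M, sform w m = 0 := fun m hm => by
        rw [sform_swap, hw_m m hm, neg_zero]
      refine ⟨M ⊔ (K ∙ w), le_sup_left, ?_, ?_, ?_⟩
      · intro a ha b hb
        rw [Submodule.mem_sup] at ha hb
        obtain ⟨m1, hm1, s1, hs1, rfl⟩ := ha
        obtain ⟨m2, hm2, s2, hs2, rfl⟩ := hb
        rw [Submodule.mem_span_singleton] at hs1 hs2
        obtain ⟨c1, rfl⟩ := hs1
        obtain ⟨c2, rfl⟩ := hs2
        rw [sform_add_left, sform_add_right, sform_add_right,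
          sform_smul_left, sform_smul_right, sform_smul_left, sform_smul_right,
          hiso m1 hm1 m2 hm2, hw_m m1 hm1, hm_w m2 hm2, sform_self]
        ring
      · intro a ha
        rw [Submodule.mem_sup] at ha
        obtain ⟨m, hm, s, hs, rfl⟩ := ha
        rw [Submodule.mem_span_singleton] at hs
        obtain ⟨c, rfl⟩ := hs
        have hgsum : g (m + c • w) = g m + c • g w := by
          rw [hadd, hsmulc, hσ]
        rw [hgsum]
        exact Submodule.add_mem _ (Submodule.mem_sup_left (hinv m hm))
          (Submodule.smul_mem _ c hgw)
      · have hw0 : w ≠ 0 := fun h => hwM (h ▸ M.zero_mem)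
        have hspan : finrank K (K ∙ w) = 1 := finrank_span_singleton hw0
        have hinf : M ⊓ (K ∙ w) = ⊥ := by
          rw [eq_bot_iff]
          intro z hz
          obtain ⟨hzM, hzw⟩ := Submodule.mem_inf.mp hz
          rw [Submodule.mem_span_singleton] at hzw
          obtain ⟨c, rfl⟩ := hzw
          rcases eq_or_ne c 0 with rfl | hc
          · simp
          · exfalso
            have h2 := M.smul_mem c⁻¹ hzM
            rw [smul_smul, inv_mul_cancel₀ hc, one_smul] at h2
            exact hwM h2
        have hsupinf := Submodule.finrank_sup_add_finrank_inf_eq M (K ∙ w)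
        rw [hinf, hspan, finrank_bot] at hsupinf
        omega
    set y := g x - mu • x with hy
    have hgxO : g x ∈ (sformB K n).orthogonal M := by
      intro m hm
      show sform m (g x) = 0
      rw [← hsa m x]
      exact hxO (g m) (hinv m hm)
    have hyO : y ∈ (sformB K n).orthogonal M :=
      Submodule.sub_mem _ hgxO (Submodule.smul_mem _ mu hxO)
    by_cases hyM : y ∈ M
    · apply hadj x hxO hxM
      have hx' : g x = y + mu • x := by rw [hy]; abel
      rw [hx']
      exact Submodule.add_mem _ (Submodule.mem_sup_left hyM)
        (Submodule.smul_mem _ mu (Submodule.mem_sup_right (Submodule.mem_span_singleton_self x)))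
    · have hgy : g y = (-mu) • y := by
        rw [hy, hsub, hGG, hsmulc, hσ]
        rw [neg_smul, smul_sub, smul_smul, ← pow_two, hmu]
        abel
      apply hadj y hyO hyM
      rw [hgy]
      exact Submodule.mem_sup_right
        (Submodule.smul_mem _ _ (Submodule.mem_span_singleton_self y))
  -- iterate the extension step
  let nextS : Submodule K (Vs K n) → Submodule K (Vs K n) := fun M =>
    if h : ∃ M' : Submodule K (Vs K n), M ≤ M' ∧
        (∀ x ∈ M', ∀ y ∈ M', sform x y = 0) ∧ (∀ x ∈ M', g x ∈ M') ∧
        finrank K M' = finrank K M + 1 then h.choose else M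
  have hle : ∀ M, M ≤ nextS M := by
    intro M
    show M ≤ dite _ _ _
    split_ifs with h
    · exact h.choose_spec.1
    · exact le_rfl
  let W0 : ℕ → Submodule K (Vs K n) := fun j => nextS^[j] ⊥
  have hW0succ : ∀ j, W0 (j + 1) = nextS (W0 j) := fun j =>
    Function.iterate_succ_apply' nextS j ⊥
  have hW0mono : Monotone W0 := monotone_nat_of_le_succ (fun j => by
    rw [hW0succ j]; exact hle _)
  have hW0 : ∀ j, j ≤ n →
      (∀ x ∈ W0 j, ∀ y ∈ W0 j, sform x y = 0) ∧ (∀ x ∈ W0 j, g x ∈ W0 j) ∧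
      finrank K (W0 j) = j := by
    intro j
    induction j with
    | zero =>
      intro _
      have hW00 : W0 0 = ⊥ := rfl
      rw [hW00]
      refine ⟨?_, ?_, ?_⟩
      · intro x hx y hy
        rw [Submodule.mem_bot] at hx
        rw [hx, sform_zero_left]
      · intro x hx
        rw [Submodule.mem_bot] at hx ⊢
        rw [hx, hg0]
      · exact finrank_bot K _
    | succ j ih =>
      intro hj1
      obtain ⟨hiso, hinv, hrank⟩ := ih (by omega)
      have hex := hstep (W0 j) hiso hinv (by omega)
      have hnx : nextS (W0 j) = hex.choose := by
        show dite _ _ _ = _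
        rw [dif_pos hex]
      obtain ⟨hle', h1, h2, h3⟩ := hex.choose_spec
      rw [hW0succ j, hnx]
      exact ⟨h1, h2, by rw [h3, hrank]⟩
  -- package the chamber
  refine ⟨fun j => W0 ((j : ℕ) + 1), ?_, ?_, ?_, ?_⟩
  · intro j
    exact (hW0 ((j : ℕ) + 1) j.isLt).2.2
  · intro j k hjk
    exact hW0mono (Nat.succ_le_succ hjk)
  · intro j
    exact (hW0 ((j : ℕ) + 1) j.isLt).1
  · intro j
    have hinv := (hW0 ((j : ℕ) + 1) j.isLt).2.1
    have hmap : Submodule.map G (W0 ((j : ℕ) + 1)) = W0 ((j : ℕ) + 1) := by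
      apply Submodule.eq_of_le_of_finrank_le
      · rintro z ⟨x, hx, rfl⟩
        exact hinv x hx
      · have hE : finrank K (Submodule.map G (W0 ((j : ℕ) + 1))) = finrank K (W0 ((j : ℕ) + 1)) :=
          LinearEquiv.finrank_map_eq (LinearEquiv.ofBijective G hbij) (W0 ((j : ℕ) + 1))
        rw [hE]
    calc g '' ((W0 ((j : ℕ) + 1) : Submodule K (Vs K n)) : Set (Vs K n))
        = ((Submodule.map G (W0 ((j : ℕ) + 1)) : Submodule K (Vs K n)) : Set (Vs K n)) :=
          (Submodule.map_coe G _).symm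
      _ = _ := by rw [hmap]
end
end

section
/- Let θ be a point-domestic collineation of the minimal Hermitian polar space of rank n ≥ 4 over (K,σ), induced by a semilinear similitude g, with no fixed points (gv ∉ ⟨v⟩ for every isotropic v ≠ 0). Then θ is an involution; every 1-dimensional subspace of K^{2n} is contained in a unique g-invariant 2-dimensional subspace, so the g-invariant 2-dimensional subspaces form a spread S of PG(2n−1,K); and the only nontrivial collineation of the polar space stabilising every member of S is θ itself. -/
/-!
STATEMENT 17: A point-domestic collineation θ of the minimal Hermitian polar space of
rank n ≥ 4 over (K,σ), induced by a semilinear similitude g, with no fixed points, is an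
involution; every 1-dimensional subspace of K^{2n} lies in a unique g-invariant
2-dimensional subspace (the invariant lines form a spread S of PG(2n−1,K)); and the only
nontrivial collineation of the polar space stabilising every member of S in the polar
space is θ itself.
-/

open Module Submodule

noncomputable section

/-- The standard nondegenerate σ-Hermitian form of Witt index n on `K^{2n}`. -/
def herm {K : Type} [Field K] (σ : K ≃+* K) {n : ℕ} (x y : Vs K n) : K :=
  ∑ j, (σ (x.1 j) * y.2 j + σ (x.2 j) * y.1 j)

/-- The point `⟨v⟩` is fixed by the collineation induced by `g`. -/
def ProjFixed {K : Type} [Field K] {n : ℕ} (g : Vs K n → Vs K n) (v : Vs K n) : Prop :=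
  ∃ c : K, g v = c • v

/-- `g` is a `τ`-semilinear bijection of `K^{2n}` which is a similitude of the standard
σ-Hermitian form; such a `g` induces a collineation of the minimal Hermitian polar
space of rank `n`. -/
structure IsHermitianCollineation {K : Type} [Field K] (σ : K ≃+* K) {n : ℕ}
    (τ : K ≃+* K) (lam : K) (g : Vs K n → Vs K n) : Prop where
  bij : Function.Bijective g
  map_add : ∀ x y, g (x + y) = g x + g y
  map_smulc : ∀ (a : K) (x : Vs K n), g (a • x) = τ a • g x
  lam_ne : lam ≠ 0
  sim : ∀ x y, herm σ (g x) (g y) = lam * τ (herm σ x y)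

section Aux
variable {K : Type} [Field K] {n : ℕ} (σ : K ≃+* K)

lemma herm_add_left (x y z : Vs K n) : herm σ (x + y) z = herm σ x z + herm σ y z := by
  simp only [herm, ← Finset.sum_add_distrib]
  refine Finset.sum_congr rfl fun j _ => ?_
  simp only [Prod.fst_add, Prod.snd_add, Pi.add_apply, map_add]; ring

lemma herm_add_right (x y z : Vs K n) : herm σ x (y + z) = herm σ x y + herm σ x z := by
  simp only [herm, ← Finset.sum_add_distrib]
  refine Finset.sum_congr rfl fun j _ => ?_
  simp only [Prod.fst_add, Prod.snd_add, Pi.add_apply, map_add]; ring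

lemma herm_smul_left (a : K) (x z : Vs K n) : herm σ (a • x) z = σ a * herm σ x z := by
  simp only [herm, Finset.mul_sum]
  refine Finset.sum_congr rfl fun j _ => ?_
  simp only [Prod.smul_fst, Prod.smul_snd, Pi.smul_apply, smul_eq_mul, map_mul]; ring

lemma herm_smul_right (a : K) (x z : Vs K n) : herm σ x (a • z) = a * herm σ x z := by
  simp only [herm, Finset.mul_sum]
  refine Finset.sum_congr rfl fun j _ => ?_
  simp only [Prod.smul_fst, Prod.smul_snd, Pi.smul_apply, smul_eq_mul]; ring

lemma herm_conj (hσinv : ∀ a : K, σ (σ a) = a) (x y : Vs K n) :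
    σ (herm σ x y) = herm σ y x := by
  simp only [herm, map_sum, map_add, map_mul, hσinv]
  refine Finset.sum_congr rfl fun j _ => ?_
  ring

lemma herm_fst (x : Fin n → K) : herm σ ((x, 0) : Vs K n) (x, 0) = 0 := by
  simp [herm]

lemma herm_snd (y : Fin n → K) : herm σ ((0, y) : Vs K n) (0, y) = 0 := by
  simp [herm]

/-- basis vectors -/
def ev (j : Fin n) : Vs K n := (Pi.single j 1, 0)
def fv (j : Fin n) : Vs K n := (0, Pi.single j 1)

lemma herm_ev_right (x : Vs K n) (j : Fin n) : herm σ x (ev j) = σ (x.2 j) := by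
  simp [herm, ev, Pi.single_apply]

lemma herm_fv_right (x : Vs K n) (j : Fin n) : herm σ x (fv j) = σ (x.1 j) := by
  simp [herm, fv, Pi.single_apply]

lemma herm_ev_left (x : Vs K n) (j : Fin n) : herm σ (ev j) x = x.2 j := by
  simp [herm, ev, Pi.single_apply]

lemma herm_fv_left (x : Vs K n) (j : Fin n) : herm σ (fv j) x = x.1 j := by
  simp [herm, fv, Pi.single_apply]

lemma herm_nondeg (w : Vs K n) (h : ∀ x : Vs K n, herm σ x w = 0) : w = 0 := by
  have h1 : ∀ j, w.1 j = 0 := by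
    intro j
    have := h (fv j); rw [herm_fv_left] at this; exact this
  have h2 : ∀ j, w.2 j = 0 := by
    intro j
    have := h (ev j); rw [herm_ev_left] at this; exact this
  ext j
  · exact h1 j
  · exact h2 j

lemma herm_nondeg' (w : Vs K n) (h : ∀ x : Vs K n, herm σ w x = 0) : w = 0 := by
  have h1 : ∀ j, σ (w.1 j) = 0 := fun j => by rw [← herm_fv_right]; exact h _
  have h2 : ∀ j, σ (w.2 j) = 0 := fun j => by rw [← herm_ev_right]; exact h _
  ext j
  · exact (map_eq_zero_iff σ σ.injective).1 (h1 j)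
  · exact (map_eq_zero_iff σ σ.injective).1 (h2 j)

lemma ev_iso (j : Fin n) : herm σ (ev j : Vs K n) (ev j) = 0 := by
  rw [herm_ev_left]; rfl

lemma ev_ne_zero (j : Fin n) : (ev j : Vs K n) ≠ 0 := by
  intro h
  have : (ev j : Vs K n).1 j = 0 := by rw [h]; rfl
  simp [ev] at this

end Aux

theorem hermitian_pointDomestic_no_fixed_points
    {K : Type} [Field K] {n : ℕ} (hn : 4 ≤ n)
    (σ : K ≃+* K) (hσinv : ∀ a : K, σ (σ a) = a) (hσne : σ ≠ RingEquiv.refl K)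
    (τ : K ≃+* K) (lam : K) (g : Vs K n → Vs K n)
    (hg : IsHermitianCollineation σ τ lam g)
    -- θ is point-domestic:
    (hpd : ∀ v : Vs K n, herm σ v v = 0 → herm σ v (g v) = 0)
    -- θ has no fixed points:
    (hnofix : ∀ v : Vs K n, v ≠ 0 → herm σ v v = 0 → ¬ ProjFixed g v) :
    -- θ is an involution:
    (∃ c : K, c ≠ 0 ∧ ∀ v : Vs K n, g (g v) = c • v) ∧
    -- every 1-dimensional subspace lies in a unique g-invariant 2-dimensional subspace,
    -- so the g-invariant lines form a spread S of PG(2n−1,K):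
    (∀ v : Vs K n, v ≠ 0 → ∃! W : Submodule K (Vs K n),
      finrank K W = 2 ∧ (∀ x ∈ W, g x ∈ W) ∧ v ∈ W) ∧
    -- the only nontrivial collineation of the polar space stabilising every member of
    -- S lying in the polar space is θ itself:
    (∀ (τ' : K ≃+* K) (lam' : K) (g' : Vs K n → Vs K n),
      IsHermitianCollineation σ τ' lam' g' →
      -- g' stabilises every totally isotropic g-invariant line:
      (∀ W : Submodule K (Vs K n), finrank K W = 2 →
        (∀ x ∈ W, ∀ y ∈ W, herm σ x y = 0) → (∀ x ∈ W, g x ∈ W) →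
        ∀ x ∈ W, g' x ∈ W) →
      -- g' induces a nontrivial collineation:
      (∃ v : Vs K n, v ≠ 0 ∧ herm σ v v = 0 ∧ ¬ ProjFixed g' v) →
      -- then g' induces the same collineation as g:
      ∀ v : Vs K n, v ≠ 0 → herm σ v v = 0 →
        span K {g' v} = span K {g v}) := by
  obtain ⟨hbij, hadd, hsmul, hlam, hsim⟩ := hg
  have hg0 : g 0 = 0 := by
    have := hadd 0 0
    simpa using this
  have hgne : ∀ v : Vs K n, v ≠ 0 → g v ≠ 0 := by
    intro v hv hgv
    exact hv (hbij.injective (hgv.trans hg0.symm))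
  -- a scalar not fixed by σ
  obtain ⟨c₀, hc₀⟩ : ∃ c : K, σ c ≠ c := by
    by_contra h
    push_neg at h
    exact hσne (RingEquiv.ext h)
  -- key polarization relation
  have key : ∀ u v : Vs K n, herm σ u u = 0 → herm σ v v = 0 → ∀ a : K,
      a * herm σ u v + σ a * herm σ v u = 0 →
      τ a * herm σ u (g v) + σ a * herm σ v (g u) = 0 := by
    intro u v hu hv a ha
    have hw : herm σ (u + a • v) (u + a • v) = 0 := by
      rw [herm_add_left, herm_add_right, herm_add_right, herm_smul_left,
        herm_smul_right, herm_smul_right, herm_smul_left, hu, hv]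
      ring_nf
      ring_nf at ha
      linear_combination ha
    have := hpd _ hw
    rw [hadd, hsmul] at this
    rw [herm_add_left, herm_add_right, herm_add_right, herm_smul_left,
      herm_smul_right, herm_smul_right, herm_smul_left, hpd u hu, hpd v hv] at this
    linear_combination this
  -- τ = σ
  have htau : ∀ a : K, τ a = σ a := by
    by_contra h
    push_neg at h
    obtain ⟨a₀, ha₀⟩ := h
    -- perpendicular isotropic pairs have B u v = 0
    have hperp : ∀ u v : Vs K n, herm σ u u = 0 → herm σ v v = 0 → herm σ u v = 0 →
        herm σ u (g v) = 0 := by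
      intro u v hu hv huv
      have hvu : herm σ v u = 0 := by
        rw [← herm_conj σ hσinv, huv, map_zero]
      have h1 := key u v hu hv 1 (by rw [huv, hvu]; ring)
      have h2 := key u v hu hv a₀ (by rw [huv, hvu]; ring)
      rw [map_one, map_one, one_mul, one_mul] at h1
      have h3 : (τ a₀ - σ a₀) * herm σ u (g v) = 0 := by linear_combination h2 - σ a₀ * h1
      rcases mul_eq_zero.1 h3 with h4 | h4
      · exact (ha₀ (sub_eq_zero.1 h4)).elim
      · exact h4
    -- derive a fixed point at ev 0
    have h0 : (0 : ℕ) < n := by omega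
    set j0 : Fin n := ⟨0, h0⟩ with hj0
    have hfix2 : ∀ j : Fin n, (g (ev j0)).2 j = 0 := by
      intro j
      have := hperp (ev j) (ev j0) (ev_iso σ j) (ev_iso σ j0)
        (by rw [herm_ev_left]; rfl)
      rwa [herm_ev_left] at this
    have hfix1 : ∀ j : Fin n, j ≠ j0 → (g (ev j0)).1 j = 0 := by
      intro j hj
      have hfv : herm σ (fv j : Vs K n) (fv j) = 0 := by rw [herm_fv_left]; rfl
      have := hperp (fv j) (ev j0) hfv (ev_iso σ j0)
        (by rw [herm_fv_left]; exact Pi.single_eq_of_ne hj 1)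
      rwa [herm_fv_left] at this
    refine hnofix (ev j0) (ev_ne_zero j0) (ev_iso σ j0) ⟨(g (ev j0)).1 j0, ?_⟩
    ext j
    · by_cases hj : j = j0
      · subst hj
        simp [ev, Pi.single_eq_same]
      · rw [hfix1 j hj]
        simp [ev, Pi.single_eq_of_ne hj]
    · rw [hfix2 j]
      simp [ev]
  -- B antisymmetric on isotropic vectors
  have hBiso : ∀ u v : Vs K n, herm σ u u = 0 → herm σ v v = 0 →
      herm σ u (g v) + herm σ v (g u) = 0 := by
    intro u v hu hv
    by_cases huv : herm σ u v = 0
    · have hvu : herm σ v u = 0 := by rw [← herm_conj σ hσinv, huv, map_zero]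
      have h1 := key u v hu hv 1 (by rw [huv, hvu]; ring)
      rw [map_one, map_one, one_mul, one_mul] at h1
      exact h1
    · set t := herm σ u v with ht
      set b := c₀ - σ c₀ with hbdef
      have hbne : b ≠ 0 := sub_ne_zero.2 (Ne.symm hc₀)
      have hσb : σ b = -b := by
        rw [hbdef, map_sub, hσinv]; ring
      set a := b * t⁻¹ with hadef
      have hane : a ≠ 0 := mul_ne_zero hbne (inv_ne_zero huv)
      have hrel : a * herm σ u v + σ a * herm σ v u = 0 := by
        have hvu : herm σ v u = σ t := by rw [herm_conj σ hσinv]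
        have hσt : σ t ≠ 0 := (map_ne_zero_iff σ σ.injective).2 huv
        rw [hvu, ← ht, hadef, map_mul, hσb, map_inv₀]
        field_simp
        ring
      have h2 := key u v hu hv a hrel
      rw [htau] at h2
      have h3 : σ a * (herm σ u (g v) + herm σ v (g u)) = 0 := by linear_combination h2
      rcases mul_eq_zero.1 h3 with h4 | h4
      · exact ((hane ((map_eq_zero_iff σ σ.injective).1 h4)).elim)
      · exact h4
  -- B antisymmetric everywhere
  have hB : ∀ x y : Vs K n, herm σ x (g y) + herm σ y (g x) = 0 := by
    intro x y
    have hx : x = ((x.1, 0) : Vs K n) + (0, x.2) := by ext j <;> simp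
    have hy : y = ((y.1, 0) : Vs K n) + (0, y.2) := by ext j <;> simp
    have e1 := hBiso (x.1, 0) (y.1, 0) (herm_fst σ x.1) (herm_fst σ y.1)
    have e2 := hBiso (x.1, 0) (0, y.2) (herm_fst σ x.1) (herm_snd σ y.2)
    have e3 := hBiso (0, x.2) (y.1, 0) (herm_snd σ x.2) (herm_fst σ y.1)
    have e4 := hBiso (0, x.2) (0, y.2) (herm_snd σ x.2) (herm_snd σ y.2)
    calc herm σ x (g y) + herm σ y (g x)
        = herm σ ((x.1, 0) + ((0, x.2) : Vs K n)) (g (((y.1, 0) : Vs K n) + (0, y.2)))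
          + herm σ ((y.1, 0) + ((0, y.2) : Vs K n)) (g (((x.1, 0) : Vs K n) + (0, x.2))) := by
          rw [← hx, ← hy]
      _ = 0 := by
          rw [hadd, hadd, herm_add_left, herm_add_left, herm_add_right, herm_add_right,
            herm_add_right, herm_add_right]
          linear_combination e1 + e2 + e3 + e4
  -- B alternating
  have hBalt : ∀ x : Vs K n, herm σ x (g x) = 0 := by
    intro x
    have hx : x = ((x.1, 0) : Vs K n) + (0, x.2) := by ext j <;> simp
    have e1 := hpd (x.1, 0) (herm_fst σ x.1)
    have e2 := hpd (0, x.2) (herm_snd σ x.2)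
    have e3 := hBiso (x.1, 0) (0, x.2) (herm_fst σ x.1) (herm_snd σ x.2)
    calc herm σ x (g x)
        = herm σ ((x.1, 0) + ((0, x.2) : Vs K n)) (g (((x.1, 0) : Vs K n) + (0, x.2))) := by
          rw [← hx]
      _ = 0 := by
          rw [hadd, herm_add_left, herm_add_right, herm_add_right]
          linear_combination e1 + e2 + e3
  -- θ is an involution
  have hinv : ∀ y : Vs K n, g (g y) = (-lam) • y := by
    intro y
    have hzero : ∀ z : Vs K n, herm σ z (g (g y) + lam • y) = 0 := by
      intro z
      obtain ⟨x, rfl⟩ := hbij.surjective z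
      have h1 : herm σ (g x) (g (g y)) = lam * σ (herm σ x (g y)) := by
        rw [hsim, htau]
      have h2 : herm σ x (g y) = - herm σ y (g x) := by linear_combination hB x y
      have h3 : σ (herm σ x (g y)) = - herm σ (g x) y := by
        rw [h2, map_neg, herm_conj σ hσinv]
      rw [herm_add_right, herm_smul_right, h1, h3]
      ring
    have h4 : g (g y) + lam • y = 0 := herm_nondeg σ _ hzero
    rw [neg_smul]
    exact eq_neg_of_add_eq_zero_left h4
  -- g has no eigenvectors at all
  have hnoeig : ∀ v : Vs K n, v ≠ 0 → ∀ a : K, g v ≠ a • v := by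
    intro v hv a h
    by_cases ha : a = 0
    · exact hgne v hv (by rw [h, ha, zero_smul])
    · have h1 : herm σ v (g v) = a * herm σ v v := by rw [h, herm_smul_right]
      have h2 : a * herm σ v v = 0 := by rw [← h1, hBalt]
      have h3 : herm σ v v = 0 := by
        rcases mul_eq_zero.1 h2 with h' | h'
        · exact (ha h').elim
        · exact h'
      exact hnofix v hv h3 ⟨a, h⟩
  -- v and g v are linearly independent for v ≠ 0
  have hindep : ∀ v : Vs K n, v ≠ 0 → ∀ s t : K, s • v + t • g v = 0 → s = 0 ∧ t = 0 := by
    intro v hv s t h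
    by_cases ht : t = 0
    · subst ht
      rw [zero_smul, add_zero] at h
      exact ⟨(smul_eq_zero.1 h).resolve_right hv, rfl⟩
    · exfalso
      apply hnoeig v hv (-(t⁻¹ * s))
      have : t • g v = -(s • v) := by linear_combination (norm := module) h
      calc g v = t⁻¹ • (t • g v) := by rw [smul_smul, inv_mul_cancel₀ ht, one_smul]
        _ = (-(t⁻¹ * s)) • v := by rw [this, smul_neg, smul_smul, neg_smul]
  -- the invariant planes
  have hWmem : ∀ u : Vs K n, u ∈ span K ({u, g u} : Set (Vs K n)) :=
    fun u => subset_span (Set.mem_insert _ _)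
  have hWgmem : ∀ u : Vs K n, g u ∈ span K ({u, g u} : Set (Vs K n)) :=
    fun u => subset_span (Set.mem_insert_of_mem _ rfl)
  have hWinv : ∀ u : Vs K n, ∀ x ∈ span K ({u, g u} : Set (Vs K n)),
      g x ∈ span K ({u, g u} : Set (Vs K n)) := by
    intro u x hx
    obtain ⟨s, t, rfl⟩ := mem_span_pair.1 hx
    have : g (s • u + t • g u) = (τ t * (-lam)) • u + τ s • g u := by
      rw [hadd, hsmul, hsmul, hinv, smul_smul]
      module
    rw [this]
    exact mem_span_pair.2 ⟨τ t * (-lam), τ s, rfl⟩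
  have hWrank : ∀ u : Vs K n, u ≠ 0 → finrank K (span K ({u, g u} : Set (Vs K n))) = 2 := by
    intro u hu
    have hli : LinearIndependent K ![u, g u] :=
      LinearIndependent.pair_iff.2 fun s t h => hindep u hu s t h
    have := finrank_span_eq_card hli
    rwa [Matrix.range_cons_cons_empty, Fintype.card_fin] at this
  have hWuniq : ∀ u : Vs K n, u ≠ 0 → ∀ W' : Submodule K (Vs K n), finrank K W' = 2 →
      (∀ x ∈ W', g x ∈ W') → u ∈ W' → W' = span K ({u, g u} : Set (Vs K n)) := by
    intro u hu W' hrank hinv' humem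
    have hle : span K ({u, g u} : Set (Vs K n)) ≤ W' := by
      rw [span_le]
      rintro x (rfl | rfl)
      · exact humem
      · exact hinv' u humem
    exact (Submodule.eq_of_le_of_finrank_le hle (by rw [hrank, hWrank u hu])).symm
  -- distinct invariant planes intersect trivially
  have hWdisj : ∀ u w : Vs K n, u ≠ 0 → w ∉ span K ({u, g u} : Set (Vs K n)) →
      span K ({u, g u} : Set (Vs K n)) ⊓ span K ({w, g w} : Set (Vs K n)) = ⊥ := by
    intro u w hu hw
    have hwne : w ≠ 0 := fun h => hw (h ▸ zero_mem _)
    rw [eq_bot_iff]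
    rintro x ⟨hxu, hxw⟩
    rw [mem_bot]
    by_contra hx0
    have h1 : span K ({u, g u} : Set (Vs K n)) = span K ({x, g x} : Set (Vs K n)) :=
      hWuniq x hx0 _ (hWrank u hu) (hWinv u) hxu
    have h2 : span K ({w, g w} : Set (Vs K n)) = span K ({x, g x} : Set (Vs K n)) :=
      hWuniq x hx0 _ (hWrank w hwne) (hWinv w) hxw
    exact hw (h1 ▸ (h2 ▸ hWmem w))
  -- total isotropy of invariant planes of isotropic vectors
  have hWti : ∀ u : Vs K n, herm σ u u = 0 →
      ∀ x ∈ span K ({u, g u} : Set (Vs K n)), ∀ y ∈ span K ({u, g u} : Set (Vs K n)),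
        herm σ x y = 0 := by
    intro u hiso x hx y hy
    obtain ⟨s, t, rfl⟩ := mem_span_pair.1 hx
    obtain ⟨s', t', rfl⟩ := mem_span_pair.1 hy
    have e1 : herm σ u (g u) = 0 := hpd u hiso
    have e2 : herm σ (g u) u = 0 := by rw [← herm_conj σ hσinv, e1, map_zero]
    have e3 : herm σ (g u) (g u) = 0 := by rw [hsim, hiso, map_zero, mul_zero]
    simp only [herm_add_left, herm_add_right, herm_smul_left, herm_smul_right,
      hiso, e1, e2, e3]
    ring
  -- every nonzero vector has an isotropic "neighbour" outside its plane
  have hneighbor : ∀ u : Vs K n, u ≠ 0 → ∃ w : Vs K n, herm σ w w = 0 ∧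
      herm σ u w = 0 ∧ w ∉ span K ({u, g u} : Set (Vs K n)) := by
    intro u hu
    set φ : (Fin n → K) →ₗ[K] K :=
      { toFun := fun s => ∑ k, σ (u.2 k) * s k
        map_add' := by intro s t; simp [mul_add, Finset.sum_add_distrib]
        map_smul' := by
          intro c s
          simp only [Pi.smul_apply, smul_eq_mul, RingHom.id_apply, Finset.mul_sum]
          exact Finset.sum_congr rfl fun k _ => by ring } with hφ
    set ψ : (Fin n → K) →ₗ[K] Vs K n := LinearMap.inl K (Fin n → K) (Fin n → K) with hψ
    have hψinj : Function.Injective ψ := LinearMap.inl_injective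
    set U : Submodule K (Fin n → K) := (span K ({u, g u} : Set (Vs K n))).comap ψ with hU
    have hUrank : finrank K U ≤ 2 := by
      have h1 : finrank K U = finrank K (U.map ψ) :=
        (Submodule.equivMapOfInjective ψ hψinj U).finrank_eq
      have h2 : U.map ψ ≤ span K ({u, g u} : Set (Vs K n)) := Submodule.map_comap_le _ _
      rw [h1, ← hWrank u hu]
      exact Submodule.finrank_mono h2
    have hker : 3 ≤ finrank K (LinearMap.ker φ) := by
      have h1 := LinearMap.finrank_range_add_finrank_ker φ
      have h2 : finrank K (LinearMap.range φ) ≤ 1 := by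
        have := (LinearMap.range φ).finrank_le
        rwa [finrank_self] at this
      have h3 : finrank K (Fin n → K) = n := Module.finrank_fin_fun K
      omega
    have hnle : ¬ (LinearMap.ker φ ≤ U) := by
      intro hle
      have := Submodule.finrank_mono hle
      omega
    obtain ⟨s, hs, hsU⟩ := SetLike.not_le_iff_exists.1 hnle
    refine ⟨(s, 0), herm_fst σ s, ?_, ?_⟩
    · have : herm σ u ((s, 0) : Vs K n) = ∑ k, σ (u.2 k) * s k := by
        simp [herm]
      rw [this]
      exact hs
    · exact hsU
  refine ⟨⟨-lam, neg_ne_zero.2 hlam, hinv⟩, ?_, ?_⟩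
  · -- unique invariant plane through every point
    intro v hv
    refine ⟨span K ({v, g v} : Set (Vs K n)), ⟨hWrank v hv, hWinv v, hWmem v⟩, ?_⟩
    rintro W' ⟨h1, h2, h3⟩
    exact hWuniq v hv W' h1 h2 h3
  · -- uniqueness of the collineation
    intro τ' lam' g' hg' hstab hnontriv
    obtain ⟨hbij', hadd', hsmul', hlam', hsim'⟩ := hg'
    have hg0' : g' 0 = 0 := by have := hadd' 0 0; simpa using this
    have hgne' : ∀ v : Vs K n, v ≠ 0 → g' v ≠ 0 := by
      intro v hv hgv
      exact hv (hbij'.injective (hgv.trans hg0'.symm))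
    -- the coefficient lemma
    have coeff : ∀ u : Vs K n, u ≠ 0 → herm σ u u = 0 → ∃ a b : K,
        a • u + b • g u = g' u ∧ (∀ c : K, τ' c * a = c * a) ∧
        (∀ c : K, τ' c * b = σ c * b) := by
      intro u hu hiso
      obtain ⟨w, hwiso, huw, hwW⟩ := hneighbor u hu
      have hwne : w ≠ 0 := fun h => hwW (h ▸ zero_mem _)
      have hdisj := hWdisj u w hu hwW
      have hwu : herm σ w u = 0 := by rw [← herm_conj σ hσinv, huw, map_zero]
      have hgu' : g' u ∈ span K ({u, g u} : Set (Vs K n)) :=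
        hstab _ (hWrank u hu) (hWti u hiso) (hWinv u) u (hWmem u)
      obtain ⟨a, b, hab⟩ := mem_span_pair.1 hgu'
      have hgw' : g' w ∈ span K ({w, g w} : Set (Vs K n)) :=
        hstab _ (hWrank w hwne) (hWti w hwiso) (hWinv w) w (hWmem w)
      obtain ⟨a', b', hab'⟩ := mem_span_pair.1 hgw'
      have main : ∀ c : K, c ≠ 0 → τ' c * a = a' * c ∧ τ' c * b = b' * σ c := by
        intro c hc
        set z : Vs K n := c • u + w with hzdef
        have hzne : z ≠ 0 := by
          intro h
          apply hwW
          have hwu' : w = (-c) • u := by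
            rw [neg_smul]
            linear_combination (norm := module) h
          rw [hwu']
          exact smul_mem _ _ (hWmem u)
        have hziso : herm σ z z = 0 := by
          simp only [hzdef, herm_add_left, herm_add_right, herm_smul_left,
            herm_smul_right, hiso, hwiso, huw, hwu]
          ring
        have hz' : g' z ∈ span K ({z, g z} : Set (Vs K n)) :=
          hstab _ (hWrank z hzne) (hWti z hziso) (hWinv z) z (hWmem z)
        obtain ⟨A, B, hAB⟩ := mem_span_pair.1 hz'
        have hgz : g z = (σ c) • g u + g w := by
          rw [hzdef, hadd, hsmul, htau]
        have hgz' : g' z = τ' c • g' u + g' w := by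
          rw [hzdef, hadd', hsmul']
        have heq : (τ' c * a - A * c) • u + (τ' c * b - B * σ c) • g u
            = (A - a') • w + (B - b') • g w := by
          linear_combination (norm := module) (τ' c) • hab + hab' - hAB + B • hgz
            - hgz' + A • hzdef
        have hmemL : (τ' c * a - A * c) • u + (τ' c * b - B * σ c) • g u ∈
            span K ({u, g u} : Set (Vs K n)) :=
          add_mem (smul_mem _ _ (hWmem u)) (smul_mem _ _ (hWgmem u))
        have hmemR : (τ' c * a - A * c) • u + (τ' c * b - B * σ c) • g u ∈
            span K ({w, g w} : Set (Vs K n)) := by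
          rw [heq]
          exact add_mem (smul_mem _ _ (hWmem w)) (smul_mem _ _ (hWgmem w))
        have hzero : (τ' c * a - A * c) • u + (τ' c * b - B * σ c) • g u = 0 := by
          have : (τ' c * a - A * c) • u + (τ' c * b - B * σ c) • g u ∈
              span K ({u, g u} : Set (Vs K n)) ⊓ span K ({w, g w} : Set (Vs K n)) :=
            ⟨hmemL, hmemR⟩
          rw [hdisj] at this
          exact (mem_bot K).1 this
        obtain ⟨e1, e2⟩ := hindep u hu _ _ hzero
        have hzeroR : (A - a') • w + (B - b') • g w = 0 := by rw [← heq]; exact hzero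
        obtain ⟨e3, e4⟩ := hindep w hwne _ _ hzeroR
        have hA : A = a' := sub_eq_zero.1 e3
        have hB' : B = b' := sub_eq_zero.1 e4
        constructor
        · have := sub_eq_zero.1 e1
          rw [this, hA]
        · have := sub_eq_zero.1 e2
          rw [this, hB']
      have h1 := main 1 one_ne_zero
      simp only [map_one, one_mul, mul_one] at h1
      obtain ⟨ha1, hb1⟩ := h1
      refine ⟨a, b, hab, ?_, ?_⟩
      · intro c
        by_cases hc : c = 0
        · simp [hc]
        · rw [(main c hc).1, ← ha1]
          ring
      · intro c
        by_cases hc : c = 0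
        · simp [hc]
        · rw [(main c hc).2, ← hb1]
          ring
    -- conclude
    obtain ⟨v₀, hv₀ne, hv₀iso, hv₀nf⟩ := hnontriv
    obtain ⟨a₀, b₀, h₀, ha₀, hb₀⟩ := coeff v₀ hv₀ne hv₀iso
    have hb₀ne : b₀ ≠ 0 := by
      intro h
      apply hv₀nf
      refine ⟨a₀, ?_⟩
      rw [← h₀, h, zero_smul, add_zero]
    have hτ' : ∀ c : K, τ' c = σ c := fun c =>
      mul_right_cancel₀ hb₀ne (hb₀ c)
    intro v hvne hviso
    obtain ⟨a, b, hab, ha, hb⟩ := coeff v hvne hviso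
    have ha0 : a = 0 := by
      have h1 := ha c₀
      rw [hτ'] at h1
      have h2 : (σ c₀ - c₀) * a = 0 := by linear_combination h1
      rcases mul_eq_zero.1 h2 with h3 | h3
      · exact ((sub_ne_zero.2 hc₀) h3).elim
      · exact h3
    have hbne : b ≠ 0 := by
      intro h
      apply hgne' v hvne
      rw [← hab, ha0, h, zero_smul, zero_smul, add_zero]
    have hgv' : g' v = b • g v := by rw [← hab, ha0, zero_smul, zero_add]
    rw [hgv']
    exact span_singleton_smul_eq (isUnit_iff_ne_zero.2 hbne) _
end
end
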